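/- arXiv:2507.10872 — 7 statements merged into one kernel-verified Lean document; each statement's English description precedes it below -/
import Mathlib

section
/- In every market in which the number of couriers is at least the minimum of the number of buyers and the number of stores (l ≥ min{m,n}), a without-tip equilibrium exists. -/
open scoped Classical
noncomputable section

namespace DeliveryPlatform

variable {m n l : ℕ}

/-- A (three-sided) allocation `x` is feasible if each buyer, each store and each
courier appears in at most one executed triple. -/
def Feasible (x : Fin m → Fin n → Fin l → Bool) : Prop :=
  (∀ b s d s' d', x b s d → x b s' d' → s = s' ∧ d = d') ∧
  (∀ b s d b' d', x b s d → x b' s d' → b = b' ∧ d = d') ∧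
  (∀ b s d b' s', x b s d → x b' s' d → b = b' ∧ s = s')

/-- The welfare of an allocation: `W(x) = Σ x_{bsd} (v_b(s) − c_d(b,s))`. -/
def Welfare (v : Fin m → Fin n → ℝ) (c : Fin l → Fin m → Fin n → ℝ)
    (x : Fin m → Fin n → Fin l → Bool) : ℝ :=
  ∑ b, ∑ s, ∑ d, if x b s d then v b s - c d b s else 0

/-- The optimal welfare over all feasible allocations. -/
def OPT (v : Fin m → Fin n → ℝ) (c : Fin l → Fin m → Fin n → ℝ) : ℝ :=
  sSup {r : ℝ | ∃ x, Feasible x ∧ Welfare v c x = r}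

/-- Utility of courier `d` from delivering the order `(b,s)`:
`w_{bs} + t_{bs} − c_d(b,s)`. -/
def cUtil (c : Fin l → Fin m → Fin n → ℝ) (w t : Fin m → Fin n → ℝ)
    (d : Fin l) (b : Fin m) (s : Fin n) : ℝ :=
  w b s + t b s - c d b s

/-- `(b,s) ∈ BR_d(w,t)`: the order `(b,s)` is utility-maximizing for courier `d`
and has nonnegative utility. -/
def InBR (c : Fin l → Fin m → Fin n → ℝ) (w t : Fin m → Fin n → ℝ)
    (d : Fin l) (b : Fin m) (s : Fin n) : Prop :=
  0 ≤ cUtil c w t d b s ∧ ∀ b' s', cUtil c w t d b' s' ≤ cUtil c w t d b s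

/-- Replace buyer `b`'s tip vector by `tb`, keeping the tips of all other
buyers (`t_{−b}`) fixed. -/
def updateTips (t : Fin m → Fin n → ℝ) (b : Fin m) (tb : Fin n → ℝ) :
    Fin m → Fin n → ℝ :=
  fun b' s' => if b' = b then tb s' else t b' s'

/-- The minimum tip `t̲_{bs}(w, t_{−b})`: the smallest nonnegative tip that buyer `b`
can attach to the order `(b,s)` (as part of some nonnegative tip vector)
so that `(b,s) ∈ BR_d` for some courier `d`. -/
def minTip (c : Fin l → Fin m → Fin n → ℝ) (w t : Fin m → Fin n → ℝ)
    (b : Fin m) (s : Fin n) : ℝ :=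
  sInf {τ : ℝ | 0 ≤ τ ∧ ∃ tb : Fin n → ℝ, (∀ s', 0 ≤ tb s') ∧ tb s = τ ∧
    ∃ d, InBR c w (updateTips t b tb) d b s}

/-- A with-tip equilibrium `(p, w, t, x)`. -/
def WithTipEq (v : Fin m → Fin n → ℝ) (c : Fin l → Fin m → Fin n → ℝ)
    (p : Fin n → ℝ) (w t : Fin m → Fin n → ℝ)
    (x : Fin m → Fin n → Fin l → Bool) : Prop :=
  Feasible x ∧
  (∀ s, 0 ≤ p s) ∧ (∀ b s, 0 ≤ w b s) ∧ (∀ b s, 0 ≤ t b s) ∧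
  -- every matched buyer buys from a utility-maximizing store, with nonnegative
  -- utility, and pays exactly the minimum tip for the store she buys from
  (∀ b s, (∃ d, x b s d) →
    0 ≤ v b s - p s - minTip c w t b s ∧
    (∀ s', v b s' - p s' - minTip c w t b s' ≤ v b s - p s - minTip c w t b s) ∧
    t b s = minTip c w t b s) ∧
  -- an unmatched buyer finds no store of positive utility
  (∀ b, (∀ s d, ¬ x b s d) → ∀ s, v b s - p s - minTip c w t b s ≤ 0) ∧
  -- every courier delivers an order in BR_d(w,t)
  (∀ d b s, x b s d → InBR c w t d b s) ∧
  (∀ d, (∀ b s, ¬ x b s d) → ∀ b s, cUtil c w t d b s ≤ 0) ∧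
  -- stores not bought from have zero purchase price
  (∀ s, (∀ b d, ¬ x b s d) → p s = 0) ∧
  -- orders not delivered have zero compensation and zero tip
  (∀ b s, (∀ d, ¬ x b s d) → w b s = 0 ∧ t b s = 0)

/-- A without-tip equilibrium `(p, w, x)`. -/
def WithoutTipEq (v : Fin m → Fin n → ℝ) (c : Fin l → Fin m → Fin n → ℝ)
    (p : Fin n → ℝ) (w : Fin m → Fin n → ℝ)
    (x : Fin m → Fin n → Fin l → Bool) : Prop :=
  Feasible x ∧
  (∀ s, 0 ≤ p s) ∧ (∀ b s, 0 ≤ w b s) ∧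
  (∀ b s, (∃ d, x b s d) →
    0 ≤ v b s - p s ∧ ∀ s', v b s' - p s' ≤ v b s - p s) ∧
  (∀ b, (∀ s d, ¬ x b s d) → ∀ s, v b s - p s ≤ 0) ∧
  (∀ d b s, x b s d →
    0 ≤ w b s - c d b s ∧ ∀ b' s', w b' s' - c d b' s' ≤ w b s - c d b s) ∧
  (∀ d, (∀ b s, ¬ x b s d) → ∀ b s, w b s - c d b s ≤ 0) ∧
  (∀ s, (∀ b d, ¬ x b s d) → p s = 0) ∧
  (∀ b s, (∀ d, ¬ x b s d) → w b s = 0)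

/-!
The buyers and stores form an assignment market. Equilibrium prices of an assignment market are
given by a minimiser `p` of the dual objective `∑ s, p s + ∑ b, max (0, max_s (u b s - p s))`
over a box of nonnegative prices: were Hall's condition to fail for the buyers of positive
surplus (resp. the stores of positive price) in the demand graph, raising (resp. lowering) the
prices of the stores involved would decrease the objective. The Mendelsohn–Dulmage theorem then
yields one matching of the demand graph covering both sets, and this is an equilibrium.

The executed orders and the couriers form a second assignment market, with values `K - c d b s`
for a large `K`. There are at most `min m n ≤ l` orders, so every order is served, and paying for
each order the cost plus the equilibrium price `π d` of its courier makes every courier's choice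
optimal.
-/

open Finset Function

theorem exists_pos_le_of_pos {ι : Type*} [Finite ι] (f : ι → ℝ) :
    ∃ δ > 0, ∀ i, 0 < f i → δ ≤ f i := by
  obtain ⟨o, ho⟩ :=
    Finite.exists_min fun o : Option ι => o.elim 1 fun i => if 0 < f i then f i else 1
  refine ⟨_, ?_, fun i hi => by simpa [hi] using ho (some i)⟩
  cases o with
  | none => exact one_pos
  | some i => dsimp only [Option.elim]; split_ifs with h <;> simp [h]

theorem sum_add_ite_mem {ι : Type*} [Fintype ι] (f : ι → ℝ) (N : Finset ι) (t : ℝ) :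
    ∑ i, (f i + if i ∈ N then t else 0) = ∑ i, f i + #N * t := by
  simp [sum_add_distrib, sum_ite_mem]

section Matching

variable {B S : Type*}

structure IsMatching (R : B → S → Prop) (μ : B → Option S) : Prop where
  rel : ∀ ⦃b s⦄, μ b = some s → R b s
  inj : ∀ ⦃b b' s⦄, μ b = some s → μ b' = some s → b = b'

theorem IsMatching.augment {R : B → S → Prop} {μ : B → Option S} (hμ : IsMatching R μ)
    {b₀ : B} {s₀ : S} (hR : R b₀ s₀) (hs₀ : ∀ b, μ b ≠ some s₀) :
    IsMatching R (update μ b₀ (some s₀)) := by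
  have key : ∀ {b s}, update μ b₀ (some s₀) b = some s →
      b = b₀ ∧ s = s₀ ∨ b ≠ b₀ ∧ μ b = some s := by
    intro b s h
    rcases eq_or_ne b b₀ with rfl | hb
    · exact .inl ⟨rfl, by simpa [eq_comm] using h⟩
    · exact .inr ⟨hb, by rwa [update_of_ne hb] at h⟩
  refine ⟨fun b s h => ?_, fun b b' s h h' => ?_⟩
  · rcases key h with ⟨rfl, rfl⟩ | ⟨-, h⟩
    exacts [hR, hμ.rel h]
  · rcases key h with ⟨rfl, rfl⟩ | ⟨-, h⟩ <;> rcases key h' with ⟨hb', hs'⟩ | ⟨-, h'⟩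
    exacts [hb'.symm, (hs₀ _ h').elim, (hs₀ _ (hs' ▸ h)).elim, hμ.inj h h']

variable [Fintype S]

/-- The Mendelsohn–Dulmage theorem, by induction on the number of `g`-edges missing from `μ`. -/
theorem IsMatching.exists_cover {R : B → S → Prop} {μ : B → Option S} (hμ : IsMatching R μ)
    {P : Finset S} (g : P → B) (hg : Injective g) (hgR : ∀ s, R (g s) s) :
    ∃ μ', IsMatching R μ' ∧ (∀ b, (μ b).isSome → (μ' b).isSome) ∧
      ∀ s ∈ P, ∃ b, μ' b = some s := by
  induction hk : #{s : P | μ (g s) ≠ some s.1} using Nat.strong_induction_on generalizing μ with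
  | _ k ih =>
  by_cases hcov : ∀ s ∈ P, ∃ b, μ b = some s
  · exact ⟨μ, hμ, fun _ h => h, hcov⟩
  push Not at hcov
  obtain ⟨s₀, hs₀P, hs₀⟩ := hcov
  set b₀ := g ⟨s₀, hs₀P⟩
  -- `s₀` is the only store whose `g`-partner is `b₀`, so reassigning `b₀` to `s₀` keeps every
  -- `g`-edge of `μ` and adds the one at `s₀`.
  have hgood : ∀ s, μ (g s) = some s.1 → update μ b₀ (some s₀) (g s) = some s.1 := by
    intro s hs
    have hne : g s ≠ b₀ := fun h => by obtain rfl := hg h; exact hs₀ _ hs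
    rwa [update_of_ne hne]
  have hlt : #{s : P | update μ b₀ (some s₀) (g s) ≠ some s.1} < k := by
    refine hk ▸ card_lt_card ⟨fun s => by simpa using mt (hgood s), fun hsub => ?_⟩
    have := hsub (mem_filter.2 ⟨mem_univ ⟨s₀, hs₀P⟩, hs₀ _⟩)
    simp [b₀] at this
  obtain ⟨μ', hμ', hsome, hcover⟩ := ih _ hlt (hμ.augment (b₀ := b₀) (s₀ := s₀) (hgR _) hs₀) rfl
  refine ⟨μ', hμ', fun b hb => hsome b ?_, hcover⟩
  rcases eq_or_ne b b₀ with rfl | hne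
  · simp
  · rwa [update_of_ne hne]

theorem exists_injective_of_hall {β : Type*} [Fintype β] (r : B → β → Prop) [DecidableRel r]
    (H : Finset B) (h : ∀ A ⊆ H, #A ≤ #{b' | ∃ a ∈ A, r a b'}) :
    ∃ f : H → β, Injective f ∧ ∀ a : H, r a (f a) := by
  refine (Fintype.all_card_le_filter_rel_iff_exists_injective fun (a : H) b => r a b).1 fun A => ?_
  calc #A = #(A.map (Embedding.subtype _)) := (card_map _).symm
    _ ≤ #{b' | ∃ a ∈ A.map (Embedding.subtype _), r a b'} :=
      h _ (by simp +contextual [subset_iff])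
    _ = #{b' | ∃ a ∈ A, r a b'} := by simp

theorem exists_isMatching_cover [Fintype B] (R : B → S → Prop) [DecidableRel R]
    (H : Finset B) (P : Finset S) (hH : ∀ A ⊆ H, #A ≤ #{s | ∃ b ∈ A, R b s})
    (hP : ∀ Q ⊆ P, #Q ≤ #{b | ∃ s ∈ Q, R b s}) :
    ∃ μ, IsMatching R μ ∧ (∀ b ∈ H, (μ b).isSome) ∧ ∀ s ∈ P, ∃ b, μ b = some s := by
  obtain ⟨F, hF, hFR⟩ := exists_injective_of_hall R H hH
  obtain ⟨g, hg, hgR⟩ := exists_injective_of_hall (fun s b => R b s) P hP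
  let μ₀ : B → Option S := fun b => if h : b ∈ H then some (F ⟨b, h⟩) else none
  have hμ₀ : IsMatching R μ₀ := by
    refine ⟨fun b s h => ?_, fun b b' s h h' => ?_⟩
    · by_cases hb : b ∈ H
      · simp only [μ₀, dif_pos hb, Option.some.injEq] at h
        exact h ▸ hFR ⟨b, hb⟩
      · simp [μ₀, hb] at h
    · by_cases hb : b ∈ H <;> by_cases hb' : b' ∈ H <;> simp [μ₀, hb, hb'] at h h'
      exact congrArg Subtype.val (hF (h.trans h'.symm))
  obtain ⟨μ, hμ, hsome, hcover⟩ := hμ₀.exists_cover g hg hgR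
  exact ⟨μ, hμ, fun b hb => hsome b (by simp [μ₀, hb]), hcover⟩

end Matching

section Potential

variable {B S : Type*} [Fintype S] (u : B → S → ℝ)

/-- The buyer's best utility; the option `none`, buying nothing, is worth `0`. -/
def surplus (p : S → ℝ) (b : B) : ℝ :=
  univ.sup' univ_nonempty fun o : Option S => o.elim 0 fun s => u b s - p s

def demand (p : S → ℝ) (b : B) : Finset S :=
  {s | u b s - p s = surplus u p b}

def potential [Fintype B] (p : S → ℝ) : ℝ :=
  ∑ s, p s + ∑ b, surplus u p b

theorem surplus_nonneg (p : S → ℝ) (b : B) : 0 ≤ surplus u p b :=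
  le_sup' (fun o : Option S => o.elim 0 fun s => u b s - p s) (mem_univ none)

theorem sub_le_surplus (p : S → ℝ) (b : B) (s : S) : u b s - p s ≤ surplus u p b :=
  le_sup' (fun o : Option S => o.elim 0 fun s => u b s - p s) (mem_univ (some s))

theorem continuous_potential [Fintype B] : Continuous (potential u) := by
  refine (continuous_finsetSum _ fun s _ => continuous_apply s).add
    (continuous_finsetSum _ fun b _ => ?_)
  refine Continuous.finset_sup'_apply _ fun o _ => ?_
  cases o
  exacts [continuous_const, continuous_const.sub (continuous_apply _)]

variable {u}

theorem surplus_le {p : S → ℝ} {b : B} {t : ℝ} (h₀ : 0 ≤ t) (h : ∀ s, u b s - p s ≤ t) :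
    surplus u p b ≤ t :=
  sup'_le _ _ fun o _ => by cases o <;> simp [h₀, h]

theorem mem_demand {p : S → ℝ} {b : B} {s : S} :
    s ∈ demand u p b ↔ u b s - p s = surplus u p b := by
  simp [demand]

theorem exists_margin [Finite B] (p : S → ℝ) : ∃ δ > 0,
    (∀ b, ∀ s ∉ demand u p b, u b s - p s + δ ≤ surplus u p b) ∧
    (∀ b, 0 < surplus u p b → δ ≤ surplus u p b) ∧ ∀ s, 0 < p s → δ ≤ p s := by
  obtain ⟨δ₁, hδ₁, h₁⟩ :=
    exists_pos_le_of_pos fun q : B × S => surplus u p q.1 - (u q.1 q.2 - p q.2)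
  obtain ⟨δ₂, hδ₂, h₂⟩ := exists_pos_le_of_pos (surplus u p)
  obtain ⟨δ₃, hδ₃, h₃⟩ := exists_pos_le_of_pos p
  refine ⟨min δ₁ (min δ₂ δ₃), by positivity, fun b s hs => ?_, fun b hb => ?_, fun s hs => ?_⟩
  · have hlt : u b s - p s < surplus u p b :=
      (sub_le_surplus u p b s).lt_of_ne fun h => hs (mem_demand.2 h)
    linarith [h₁ (b, s) (by simpa using hlt), min_le_left δ₁ (min δ₂ δ₃)]
  · exact (min_le_right _ _).trans ((min_le_left _ _).trans (h₂ b hb))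
  · exact (min_le_right _ _).trans ((min_le_right _ _).trans (h₃ s hs))

variable [Fintype B] {M : ℝ} {p : S → ℝ}

/-- Hall's condition for the buyers with positive surplus: otherwise raising the prices of the
stores they demand would lower the potential. -/
theorem card_le_card_demand_of_isMinOn (hM : ∀ b s, u b s ≤ M)
    (hp : p ∈ Set.Icc 0 fun _ => M) (hmin : IsMinOn (potential u) (Set.Icc 0 fun _ => M) p)
    (A : Finset B) (hA : ∀ b ∈ A, 0 < surplus u p b) :
    #A ≤ #{s | ∃ b ∈ A, s ∈ demand u p b} := by
  by_contra! hlt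
  obtain ⟨δ, hδ, hgap, hsur, -⟩ := exists_margin (u := u) p
  set N : Finset S := {s | ∃ b ∈ A, s ∈ demand u p b}
  set q : S → ℝ := fun s => p s + if s ∈ N then δ else 0
  have hpq : ∀ s, p s ≤ q s := fun s => by simp only [q]; split_ifs <;> linarith
  have hq : q ∈ Set.Icc 0 fun _ => M := by
    refine ⟨fun s => (hp.1 s).trans (hpq s), fun s => ?_⟩
    by_cases hs : s ∈ N
    · obtain ⟨b, hb, hsb⟩ : ∃ b ∈ A, s ∈ demand u p b := by simpa [N] using hs
      simp only [q, if_pos hs]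
      linarith [mem_demand.1 hsb, hsur b (hA b hb), hM b s]
    · simpa [q, hs] using hp.2 s
  have hsurplus : ∀ b, surplus u q b ≤ surplus u p b + if b ∈ A then -δ else 0 := by
    intro b
    by_cases hb : b ∈ A
    · rw [if_pos hb]
      refine surplus_le (by linarith [hsur b (hA b hb)]) fun s => ?_
      by_cases hs : s ∈ N
      · simp only [q, if_pos hs]; linarith [sub_le_surplus u p b s]
      · have hsb : s ∉ demand u p b := fun h => hs (by simpa [N] using ⟨b, hb, h⟩)
        simp only [q, if_neg hs]; linarith [hgap b s hsb]
    · rw [if_neg hb, add_zero]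
      exact surplus_le (surplus_nonneg u p b) fun s => by linarith [sub_le_surplus u p b s, hpq s]
  have hlower : potential u q < potential u p := by
    calc potential u q ≤ (∑ s, p s + #N * δ) + (∑ b, surplus u p b + #A * -δ) :=
          add_le_add (sum_add_ite_mem p N δ).le
            ((sum_le_sum fun b _ => hsurplus b).trans (sum_add_ite_mem _ A (-δ)).le)
      _ < potential u p := by
          have : (#N : ℝ) + 1 ≤ #A := by exact_mod_cast hlt
          rw [potential]; nlinarith
  exact (hlower.trans_le (hmin hq)).false

/-- Hall's condition for the stores with positive price: otherwise lowering their prices would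
lower the potential. -/
theorem card_le_card_demanding_of_isMinOn (hp : p ∈ Set.Icc 0 fun _ => M)
    (hmin : IsMinOn (potential u) (Set.Icc 0 fun _ => M) p)
    (Q : Finset S) (hQ : ∀ s ∈ Q, 0 < p s) :
    #Q ≤ #{b | ∃ s ∈ Q, s ∈ demand u p b} := by
  by_contra! hlt
  obtain ⟨δ, hδ, hgap, -, hprice⟩ := exists_margin (u := u) p
  set T : Finset B := {b | ∃ s ∈ Q, s ∈ demand u p b}
  set q : S → ℝ := fun s => p s + if s ∈ Q then -δ else 0
  have hqp : ∀ s, q s ≤ p s := fun s => by simp only [q]; split_ifs <;> linarith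
  have hq : q ∈ Set.Icc 0 fun _ => M := by
    refine ⟨fun s => ?_, fun s => (hqp s).trans (hp.2 s)⟩
    by_cases hs : s ∈ Q
    · simp only [q, if_pos hs, Pi.zero_apply]; linarith [hprice s (hQ s hs)]
    · simpa [q, hs] using hp.1 s
  have hsurplus : ∀ b, surplus u q b ≤ surplus u p b + if b ∈ T then δ else 0 := by
    intro b
    by_cases hb : b ∈ T
    · rw [if_pos hb]
      refine surplus_le (by linarith [surplus_nonneg u p b]) fun s => ?_
      have : p s ≤ q s + δ := by simp only [q]; split_ifs <;> linarith
      linarith [sub_le_surplus u p b s]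
    · rw [if_neg hb, add_zero]
      refine surplus_le (surplus_nonneg u p b) fun s => ?_
      by_cases hs : s ∈ Q
      · have hsb : s ∉ demand u p b := fun h => hb (by simpa [T] using ⟨s, hs, h⟩)
        simp only [q, if_pos hs]; linarith [hgap b s hsb]
      · simp only [q, if_neg hs, add_zero]; exact sub_le_surplus u p b s
  have hlower : potential u q < potential u p := by
    calc potential u q ≤ (∑ s, p s + #Q * -δ) + (∑ b, surplus u p b + #T * δ) :=
          add_le_add (sum_add_ite_mem p Q (-δ)).le
            ((sum_le_sum fun b _ => hsurplus b).trans (sum_add_ite_mem _ T δ).le)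
      _ < potential u p := by
          have : (#T : ℝ) + 1 ≤ #Q := by exact_mod_cast hlt
          rw [potential]; nlinarith
  exact (hlower.trans_le (hmin hq)).false

end Potential

section Equilibrium

variable {B S : Type*}

structure IsCompetitiveEquilibrium (u : B → S → ℝ) (p : S → ℝ) (μ : B → Option S) : Prop where
  price_nonneg : ∀ s, 0 ≤ p s
  inj : ∀ ⦃b b' s⦄, μ b = some s → μ b' = some s → b = b'
  utility_nonneg : ∀ ⦃b s⦄, μ b = some s → 0 ≤ u b s - p s
  utility_le : ∀ ⦃b s⦄, μ b = some s → ∀ s', u b s' - p s' ≤ u b s - p s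
  utility_nonpos : ∀ ⦃b⦄, μ b = none → ∀ s, u b s - p s ≤ 0
  price_eq_zero : ∀ ⦃s⦄, (∀ b, μ b ≠ some s) → p s = 0

variable [Fintype S] {u : B → S → ℝ} {p : S → ℝ} {μ : B → Option S}

theorem isCompetitiveEquilibrium_of_isMatching (hp : ∀ s, 0 ≤ p s)
    (hμ : IsMatching (fun b s => s ∈ demand u p b) μ)
    (hH : ∀ b, 0 < surplus u p b → (μ b).isSome) (hP : ∀ s, 0 < p s → ∃ b, μ b = some s) :
    IsCompetitiveEquilibrium u p μ where
  price_nonneg := hp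
  inj := hμ.inj
  utility_nonneg _ _ h := (mem_demand.1 (hμ.rel h)).symm ▸ surplus_nonneg u p _
  utility_le _ _ h s' := (mem_demand.1 (hμ.rel h)).symm ▸ sub_le_surplus u p _ s'
  utility_nonpos b h s :=
    (sub_le_surplus u p b s).trans (not_lt.1 fun hb => by simpa [h] using hH b hb)
  price_eq_zero s h := (not_lt.1 fun hs => (hP s hs).elim h).antisymm (hp s)

theorem exists_isCompetitiveEquilibrium [Fintype B] (u : B → S → ℝ) :
    ∃ p μ, IsCompetitiveEquilibrium u p μ := by
  obtain ⟨M, hM⟩ := Finite.exists_le fun q : B × S => u q.1 q.2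
  have hbox : (Set.Icc 0 fun _ => max M 0 : Set (S → ℝ)).Nonempty :=
    ⟨0, le_rfl, fun _ => le_max_right _ _⟩
  obtain ⟨p, hp, hmin⟩ := isCompact_Icc.exists_isMinOn hbox (continuous_potential u).continuousOn
  have hallH : ∀ A ⊆ ({b | 0 < surplus u p b} : Finset B),
      #A ≤ #{s | ∃ b ∈ A, s ∈ demand u p b} := fun A hA =>
    card_le_card_demand_of_isMinOn (u := u) (fun b s => (hM (b, s)).trans (le_max_left _ _))
      hp hmin A fun b hb => (mem_filter.1 (hA hb)).2
  have hallP : ∀ Q ⊆ ({s | 0 < p s} : Finset S), #Q ≤ #{b | ∃ s ∈ Q, s ∈ demand u p b} :=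
    fun Q hQ => card_le_card_demanding_of_isMinOn hp hmin Q fun s hs => (mem_filter.1 (hQ hs)).2
  obtain ⟨μ, hμ, hH, hP⟩ := exists_isMatching_cover (fun b s => s ∈ demand u p b) _ _ hallH hallP
  exact ⟨p, μ, isCompetitiveEquilibrium_of_isMatching hp.1 hμ (fun b hb => hH b (by simpa))
    fun s hs => hP s (by simpa)⟩

theorem IsCompetitiveEquilibrium.card_matched_le [Fintype B]
    (hE : IsCompetitiveEquilibrium u p μ) :
    #{b | (μ b).isSome} ≤ Fintype.card S := by
  calc #{b | (μ b).isSome} ≤ #((univ : Finset (Option S)).erase none) :=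
        card_le_card_of_injOn μ (fun b hb => by simpa [Option.isSome_iff_ne_none] using hb)
          fun b hb b' _ h => by
            obtain ⟨s, hs⟩ := Option.isSome_iff_exists.1 (mem_filter.1 hb).2
            exact hE.inj hs (h ▸ hs)
    _ = Fintype.card S := by simp

/-- An unmatched buyer of `C` would make every price positive, hence every store sold to one of
the other buyers of `C`. -/
theorem IsCompetitiveEquilibrium.isSome_of_card_le [Fintype B]
    (hE : IsCompetitiveEquilibrium u p μ) {C : Finset B} (hμC : ∀ b, (μ b).isSome → b ∈ C)
    (hC : ∀ b ∈ C, ∀ s, 0 < u b s) (hcard : #C ≤ Fintype.card S) {b : B} (hb : b ∈ C) :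
    (μ b).isSome := by
  by_contra hnone
  rw [Option.not_isSome_iff_eq_none] at hnone
  have hsold : ∀ s, ∃ b', μ b' = some s := fun s => by
    by_contra! hunsold
    linarith [hE.price_eq_zero hunsold, hE.utility_nonpos hnone s, hC b hb s]
  choose buyer hbuyer using hsold
  have : Fintype.card S ≤ #(C.erase b) := by
    refine card_le_card_of_injOn buyer (fun s _ => mem_erase.2 ⟨fun h => ?_, hμC _ ?_⟩)
      fun s _ s' _ h => Option.some_injective _ ((hbuyer s).symm.trans (h ▸ hbuyer s'))
    · simp [← h, hbuyer] at hnone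
    · simp [hbuyer]
  rw [card_erase_of_mem hb] at this
  have : 0 < #C := card_pos.2 ⟨b, hb⟩
  omega

end Equilibrium

section Delivery

variable {v : Fin m → Fin n → ℝ} {c : Fin l → Fin m → Fin n → ℝ} {K : ℝ} {p : Fin n → ℝ}
  {π : Fin l → ℝ} {μ : Fin m → Option (Fin n)} {ν : Fin m → Option (Fin l)}

/-- The market of executed orders and couriers. An order is indexed by its buyer; buyers who buy
nothing value every courier at `-1`, so they are never served. -/
def courierValue (c : Fin l → Fin m → Fin n → ℝ) (K : ℝ) (μ : Fin m → Option (Fin n))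
    (b : Fin m) (d : Fin l) : ℝ :=
  (μ b).elim (-1) fun s => K - c d b s

def allocation (μ : Fin m → Option (Fin n)) (ν : Fin m → Option (Fin l)) :
    Fin m → Fin n → Fin l → Bool :=
  fun b s d => decide (μ b = some s ∧ ν b = some d)

def compensation (c : Fin l → Fin m → Fin n → ℝ) (π : Fin l → ℝ) (μ : Fin m → Option (Fin n))
    (ν : Fin m → Option (Fin l)) (b : Fin m) (s : Fin n) : ℝ :=
  if μ b = some s then (ν b).elim 0 fun d => c d b s + π d else 0

theorem allocation_iff {b : Fin m} {s : Fin n} {d : Fin l} :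
    allocation μ ν b s d ↔ μ b = some s ∧ ν b = some d := by
  simp [allocation]

theorem isSome_iff_of_courierValue (hK : ∀ d b s, c d b s < K) (hl : min m n ≤ l)
    (hμ : IsCompetitiveEquilibrium v p μ) (hν : IsCompetitiveEquilibrium (courierValue c K μ) π ν)
    (b : Fin m) : (ν b).isSome ↔ (μ b).isSome := by
  have hserved : ∀ b, (ν b).isSome → (μ b).isSome := fun b hb => by
    obtain ⟨d, hd⟩ := Option.isSome_iff_exists.1 hb
    by_contra hnone
    have := hν.utility_nonneg hd
    simp [courierValue, Option.not_isSome_iff_eq_none.1 hnone] at this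
    linarith [hν.price_nonneg d]
  refine ⟨hserved b, fun hb => hν.isSome_of_card_le (C := {b | (μ b).isSome})
    (fun b h => by simpa using hserved b h) (fun b hb d => ?_) ?_ (by simpa using hb)⟩
  · obtain ⟨s, hs⟩ := Option.isSome_iff_exists.1 (mem_filter.1 hb).2
    simpa [courierValue, hs] using hK d b s
  · calc #{b | (μ b).isSome} ≤ min m n :=
          le_min (card_le_univ _ |>.trans_eq (Fintype.card_fin m))
            (hμ.card_matched_le.trans_eq (Fintype.card_fin n))
      _ ≤ l := hl
      _ = Fintype.card (Fin l) := (Fintype.card_fin l).symm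

theorem feasible_allocation (hμ : ∀ ⦃b b' s⦄, μ b = some s → μ b' = some s → b = b')
    (hν : ∀ ⦃b b' d⦄, ν b = some d → ν b' = some d → b = b') : Feasible (allocation μ ν) := by
  simp only [Feasible, allocation_iff]
  refine ⟨fun b s d s' d' h h' => ?_, fun b s d b' d' h h' => ?_, fun b s d b' s' h h' => ?_⟩
  · simp_all
  · obtain rfl := hμ h.1 h'.1
    simp_all
  · obtain rfl := hν h.2 h'.2
    simp_all

theorem compensation_sub_cost_eq {b : Fin m} {s : Fin n} {d : Fin l} (hs : μ b = some s)
    (hd : ν b = some d) : compensation c π μ ν b s - c d b s = π d := by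
  simp [compensation, hs, hd]

theorem compensation_sub_cost_le (hc : ∀ d b s, 0 ≤ c d b s)
    (hν : IsCompetitiveEquilibrium (courierValue c K μ) π ν)
    (hserved : ∀ b, (ν b).isSome ↔ (μ b).isSome) (b : Fin m) (s : Fin n) (d : Fin l) :
    compensation c π μ ν b s - c d b s ≤ π d := by
  by_cases hs : μ b = some s
  · obtain ⟨d', hd'⟩ := Option.isSome_iff_exists.1 ((hserved b).2 (by simp [hs]))
    have := hν.utility_le hd' d
    simp only [courierValue, hs, Option.elim] at this
    simp only [compensation, hs, hd', if_true, Option.elim]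
    linarith
  · simp only [compensation, hs, if_false]
    linarith [hc d b s, hν.price_nonneg d]

theorem withoutTipEq_of_isCompetitiveEquilibrium (hc : ∀ d b s, 0 ≤ c d b s)
    (hμ : IsCompetitiveEquilibrium v p μ) (hν : IsCompetitiveEquilibrium (courierValue c K μ) π ν)
    (hserved : ∀ b, (ν b).isSome ↔ (μ b).isSome) :
    WithoutTipEq v c p (compensation c π μ ν) (allocation μ ν) := by
  have hexec : ∀ b s, (∃ d, allocation μ ν b s d) ↔ μ b = some s := fun b s => by
    simp only [allocation_iff]
    refine ⟨fun ⟨_, h, _⟩ => h, fun h => ?_⟩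
    obtain ⟨d, hd⟩ := Option.isSome_iff_exists.1 ((hserved b).2 (by simp [h]))
    exact ⟨d, h, hd⟩
  refine ⟨feasible_allocation hμ.inj hν.inj, hμ.price_nonneg, fun b s => ?_,
    fun b s h => ?_, fun b h s => ?_, fun d b s h => ?_, fun d h b s => ?_,
    fun s h => hμ.price_eq_zero fun b hb => ?_, fun b s h => ?_⟩
  · unfold compensation
    split_ifs
    · cases ν b <;> simp [add_nonneg (hc _ _ _) (hν.price_nonneg _)]
    · exact le_rfl
  · exact ⟨hμ.utility_nonneg ((hexec b s).1 h), hμ.utility_le ((hexec b s).1 h)⟩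
  · cases hb : μ b with
    | none => exact hμ.utility_nonpos hb s
    | some s' => exact absurd ((hexec b s').2 hb) (by simpa using h s')
  · obtain ⟨hs, hd⟩ := allocation_iff.1 h
    rw [compensation_sub_cost_eq hs hd]
    exact ⟨hν.price_nonneg d, fun b' s' => compensation_sub_cost_le hc hν hserved b' s' d⟩
  · have hrent : π d = 0 := hν.price_eq_zero fun b' hb' => by
      obtain ⟨s', hs'⟩ := Option.isSome_iff_exists.1 ((hserved b').1 (by simp [hb']))
      exact h b' s' (allocation_iff.2 ⟨hs', hb'⟩)
    simpa [hrent] using compensation_sub_cost_le hc hν hserved b s d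
  · obtain ⟨d, hd⟩ := (hexec b s).2 hb
    exact h b d hd
  · have hs : μ b ≠ some s := fun hs => by
      obtain ⟨d, hd⟩ := (hexec b s).2 hs
      exact h d hd
    simp [compensation, hs]

end Delivery

theorem without_tip_equilibrium_exists_general
    (v : Fin m → Fin n → ℝ) (c : Fin l → Fin m → Fin n → ℝ)
    (hc : ∀ d b s, 0 ≤ c d b s)
    (hl : min m n ≤ l) :
    ∃ (p : Fin n → ℝ) (w : Fin m → Fin n → ℝ) (x : Fin m → Fin n → Fin l → Bool),
      WithoutTipEq v c p w x := by
  obtain ⟨p, μ, hμ⟩ := exists_isCompetitiveEquilibrium v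
  obtain ⟨K, hK⟩ := Finite.exists_le fun q : Fin l × Fin m × Fin n => c q.1 q.2.1 q.2.2
  have hK' : ∀ d b s, c d b s < K + 1 := fun d b s => (hK (d, b, s)).trans_lt (lt_add_one K)
  obtain ⟨π, ν, hν⟩ := exists_isCompetitiveEquilibrium (courierValue c (K + 1) μ)
  exact ⟨p, _, _, withoutTipEq_of_isCompetitiveEquilibrium hc hμ hν
    (isSome_iff_of_courierValue hK' hl hμ hν)⟩

/-- If `l ≥ min{m,n}`, a without-tip equilibrium exists. -/
theorem without_tip_equilibrium_exists
    (v : Fin m → Fin n → ℝ) (c : Fin l → Fin m → Fin n → ℝ)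
    (hv : ∀ b s, 0 ≤ v b s) (hc : ∀ d b s, 0 ≤ c d b s)
    (hl : min m n ≤ l) :
    ∃ (p : Fin n → ℝ) (w : Fin m → Fin n → ℝ) (x : Fin m → Fin n → Fin l → Bool),
      WithoutTipEq v c p w x :=
  without_tip_equilibrium_exists_general v c hc hl

end DeliveryPlatform
end
end

section
/- In the market with two buyers b1, b2, two stores s1, s2, and one courier d1, where v_{b1}(s1)=4, v_{b1}(s2)=2, v_{b2}(s1)=1, v_{b2}(s2)=3 and all delivery costs are zero, there exists no without-tip equilibrium. In particular, a without-tip equilibrium can fail to exist in a market with l < min{m,n}. -/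
/-!
A feasible allocation matches buyers and stores injectively into the couriers, so with fewer
couriers than buyers and than stores some buyer `b` and some store `s` do not trade. An unsold
store has price zero and an unmatched buyer sees no store of positive utility, hence
`v_b(s) ≤ 0`; this is impossible when every valuation is positive, as in the example.
-/

open scoped Classical
noncomputable section

namespace DeliveryPlatform

variable {m n l : ℕ}

theorem Feasible.exists_unmatched_buyer {x : Fin m → Fin n → Fin l → Bool} (hx : Feasible x)
    (hlm : l < m) : ∃ b, ∀ s d, ¬ x b s d := by
  by_contra! hall
  choose s d hsd using hall
  have hd : Function.Injective d := fun b b' h =>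
    (hx.2.2 b (s b) (d b) b' (s b') (hsd b) (h ▸ hsd b')).1
  exact hlm.not_ge (by simpa using Fintype.card_le_of_injective d hd)

theorem Feasible.exists_unsold_store {x : Fin m → Fin n → Fin l → Bool} (hx : Feasible x)
    (hln : l < n) : ∃ s, ∀ b d, ¬ x b s d := by
  by_contra! hall
  choose b d hbd using hall
  have hd : Function.Injective d := fun s s' h =>
    (hx.2.2 (b s) s (d s) (b s') s' (hbd s) (h ▸ hbd s')).2
  exact hln.not_ge (by simpa using Fintype.card_le_of_injective d hd)

theorem WithoutTipEq.valuation_nonpos {v : Fin m → Fin n → ℝ} {c : Fin l → Fin m → Fin n → ℝ}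
    {p : Fin n → ℝ} {w : Fin m → Fin n → ℝ} {x : Fin m → Fin n → Fin l → Bool}
    (hE : WithoutTipEq v c p w x) {b : Fin m} (hb : ∀ s d, ¬ x b s d) {s : Fin n}
    (hs : ∀ b d, ¬ x b s d) : v b s ≤ 0 := by
  obtain ⟨-, -, -, -, hunmatched, -, -, hunsold, -⟩ := hE
  simpa [hunsold s hs] using hunmatched b hb s

theorem not_withoutTipEq_of_valuation_pos {v : Fin m → Fin n → ℝ}
    (c : Fin l → Fin m → Fin n → ℝ) (p : Fin n → ℝ) (w : Fin m → Fin n → ℝ)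
    (x : Fin m → Fin n → Fin l → Bool) (hlm : l < m) (hln : l < n)
    (hv : ∀ b s, 0 < v b s) : ¬ WithoutTipEq v c p w x := by
  intro hE
  obtain ⟨b, hb⟩ := hE.1.exists_unmatched_buyer hlm
  obtain ⟨s, hs⟩ := hE.1.exists_unsold_store hln
  exact (hv b s).not_ge (hE.valuation_nonpos hb hs)

/-- In the market with two buyers, two stores and one courier,
with valuations `v_{b1}(s1)=4, v_{b1}(s2)=2, v_{b2}(s1)=1, v_{b2}(s2)=3` and all
delivery costs zero, no without-tip equilibrium exists; in particular a
without-tip equilibrium can fail to exist when `l < min{m,n}`. -/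
theorem no_without_tip_equilibrium_example :
    (1 < min 2 2) ∧
    ¬ ∃ (p : Fin 2 → ℝ) (w : Fin 2 → Fin 2 → ℝ) (x : Fin 2 → Fin 2 → Fin 1 → Bool),
      WithoutTipEq (fun b s => !![(4 : ℝ), 2; 1, 3] b s)
        (fun _ _ _ => (0 : ℝ)) p w x := by
  refine ⟨by norm_num, fun ⟨p, w, x, hE⟩ => ?_⟩
  have hv : ∀ b s, 0 < !![(4 : ℝ), 2; 1, 3] b s := by
    intro b s
    fin_cases b <;> fin_cases s <;> norm_num
  exact not_withoutTipEq_of_valuation_pos _ p w x (by norm_num) (by norm_num) hv hE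

end DeliveryPlatform
end
end

section
/- Let Ω ⊆ O be a set of orders in which each buyer and each store appears at most once, with |Ω| < l. Then: (i) in any courier plan (w,y) that serves Ω, the courier allocation y is a minimum-cost matching covering Ω in G_D; (ii) in any courier plan serving Ω, every courier d's utility is at most ū_d := C_Ω(G_D \ d) − C_Ω(G_D); and (iii) there exists a courier plan (w̄, y) serving Ω with w̄_{bs} = 0 for every order (b,s) ∉ Ω in which every courier d attains utility exactly ū_d. -/
/-!
Restricted to the orders of `Ω`, a courier allocation is an injection `Ω ↪ D`, and the lemma
says that the VCG utilities `ū_d = C_Ω(G_D \ d) − C_Ω(G_D)` form a competitive equilibrium of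
this assignment game. Weak duality: if utilities `u` support a plan with assignment `a`, then
for every assignment `b` the couriers idle under `b` have total utility at most
`cost b − cost a`; taking `b` optimal, resp. optimal avoiding `d`, gives (i) and (ii).
For (iii) put `w̄_o = ū_{σ o} + c_{σ o}(o)` along an optimal `σ`. That no courier `e` prefers
another order `i` is an exchange argument: swapping `σ` and an optimal `N` avoiding `e` along
the alternating path that starts at `e`, and moving `i` to `e`, yields two assignments, one of
them avoiding `σ i`, of total cost `cost N + cost σ + c_e(i) − c_{σ i}(i)`.
-/

open scoped Classical
noncomputable section

namespace DeliveryPlatform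

variable {m n l : ℕ}

/-- A courier allocation: a matching in the bipartite graph `G_D` between orders
and couriers, in which additionally no buyer and no store appears in more than
one matched order. -/
def CourierAlloc (y : Fin m × Fin n → Fin l → Bool) : Prop :=
  (∀ d o o', y o d → y o' d → o = o') ∧
  (∀ o d d', y o d → y o d' → d = d') ∧
  (∀ o d o' d', y o d → y o' d' → o.1 = o'.1 → o = o') ∧
  (∀ o d o' d', y o d → y o' d' → o.2 = o'.2 → o = o')

/-- Total delivery cost of a courier allocation. -/
def totalCost (c : Fin l → Fin m → Fin n → ℝ)
    (y : Fin m × Fin n → Fin l → Bool) : ℝ :=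
  ∑ o, ∑ d, if y o d then c d o.1 o.2 else 0

/-- The courier allocation `y` covers the set of orders `Ω`. -/
def Covers (Ω : Finset (Fin m × Fin n)) (y : Fin m × Fin n → Fin l → Bool) : Prop :=
  ∀ o ∈ Ω, ∃ d, y o d

/-- The courier allocation `y` serves `Ω`: exactly the orders of `Ω` are delivered. -/
def Serves (Ω : Finset (Fin m × Fin n)) (y : Fin m × Fin n → Fin l → Bool) : Prop :=
  ∀ o, (∃ d, y o d) ↔ o ∈ Ω

/-- `C_Ω(G_D)`: the minimum total cost of a courier allocation covering `Ω`. -/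
def minCost (c : Fin l → Fin m → Fin n → ℝ) (Ω : Finset (Fin m × Fin n)) : ℝ :=
  sInf {r : ℝ | ∃ y, CourierAlloc y ∧ Covers Ω y ∧ totalCost c y = r}

/-- `C_Ω(G_D \ d₀)`: the minimum total cost of a courier allocation covering `Ω`
in which courier `d₀` is unused. -/
def minCostWithout (c : Fin l → Fin m → Fin n → ℝ) (Ω : Finset (Fin m × Fin n))
    (d0 : Fin l) : ℝ :=
  sInf {r : ℝ | ∃ y, CourierAlloc y ∧ Covers Ω y ∧ (∀ o, ¬ y o d0) ∧
    totalCost c y = r}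

/-- A courier plan `(w, y)`: every matched courier delivers a utility-maximizing
order with nonnegative utility, and every unmatched courier has no order of
positive utility. -/
def CourierPlan (c : Fin l → Fin m → Fin n → ℝ) (w : Fin m × Fin n → ℝ)
    (y : Fin m × Fin n → Fin l → Bool) : Prop :=
  CourierAlloc y ∧ (∀ o, 0 ≤ w o) ∧
  (∀ d o, y o d →
    0 ≤ w o - c d o.1 o.2 ∧ ∀ o', w o' - c d o'.1 o'.2 ≤ w o - c d o.1 o.2) ∧
  (∀ d, (∀ o, ¬ y o d) → ∀ o, w o - c d o.1 o.2 ≤ 0)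

/-- Utility of courier `d` in the courier plan `(w, y)` (zero if unmatched). -/
def planUtil (c : Fin l → Fin m → Fin n → ℝ) (w : Fin m × Fin n → ℝ)
    (y : Fin m × Fin n → Fin l → Bool) (d : Fin l) : ℝ :=
  ∑ o, if y o d then w o - c d o.1 o.2 else 0

/-- In `Ω`, every buyer and every store appears at most once. -/
def PairwiseDistinct (Ω : Finset (Fin m × Fin n)) : Prop :=
  (∀ o ∈ Ω, ∀ o' ∈ Ω, Prod.fst o = Prod.fst o' → o = o') ∧
  (∀ o ∈ Ω, ∀ o' ∈ Ω, Prod.snd o = Prod.snd o' → o = o')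

/-- `Ω_x`: the set of orders delivered under the allocation `x`. -/
def OrdersOf (x : Fin m → Fin n → Fin l → Bool) : Finset (Fin m × Fin n) :=
  Finset.univ.filter fun o => ∃ d, x o.1 o.2 d

open Finset

section Assignment

variable {ι κ : Type*} (c : ι → κ → ℝ)

theorem exists_alternating_set (σ N : ι ↪ κ) {d : κ} (hd : d ∉ Set.range N) {i : ι}
    (hdi : σ i ≠ d) :
    ∃ S : Set ι, i ∉ S ∧ (∀ k ∉ S, σ k ≠ d) ∧ (∀ j ∈ S, ∀ k ∉ S, σ j ≠ N k) ∧
      ∀ j ∈ S, ∀ k ∉ S, k ≠ i → N j ≠ σ k := by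
  -- `S` is the set of rows on the alternating path `d, σ⁻¹ d, N (σ⁻¹ d), …`,
  -- stopped before it enters row `i`
  set R : ι → ι → Prop := fun j k => N j = σ k ∧ k ≠ i
  refine ⟨{k | ∃ j, σ j = d ∧ Relation.ReflTransGen R j k}, ?_, ?_, ?_, ?_⟩
  · rintro ⟨j, hj, hji⟩
    rcases (Relation.ReflTransGen.cases_tail_iff R j i).1 hji with rfl | ⟨_, _, -, hii⟩
    · exact hdi hj
    · exact hii rfl
  · exact fun k hk hkd => hk ⟨k, hkd, .refl⟩
  · rintro j ⟨j₀, hj₀, hj⟩ k hk hjk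
    rcases (Relation.ReflTransGen.cases_tail_iff R j₀ j).1 hj with rfl | ⟨p, hp, hpj, -⟩
    · exact hd ⟨k, hjk.symm.trans hj₀⟩
    · exact hk ⟨j₀, hj₀, N.injective (hpj.trans hjk) ▸ hp⟩
  · rintro j ⟨j₀, hj₀, hj⟩ k hk hki hjk
    exact hk ⟨j₀, hj₀, hj.tail ⟨hjk, hki⟩⟩

/-- Competitive equilibrium of the assignment game: row `i` pays `w i`, column `e` earns `u e`. -/
structure IsEquilibrium (w : ι → ℝ) (a : ι → κ) (u : κ → ℝ) : Prop where
  nonneg : ∀ e, 0 ≤ u e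
  sub_le : ∀ i e, w i - c i e ≤ u e
  apply_eq : ∀ i, u (a i) = w i - c i (a i)
  eq_zero : ∀ e ∉ Set.range a, u e = 0

variable [Fintype ι]

def assignCost (a : ι → κ) : ℝ := ∑ i, c i (a i)

theorem assignCost_piecewise_add (S : Set ι) (f g : ι → κ) :
    assignCost c (S.piecewise f g) + assignCost c (S.piecewise g f) =
      assignCost c f + assignCost c g := by
  simp only [assignCost, ← sum_add_distrib]
  refine sum_congr rfl fun i _ => ?_
  by_cases hi : i ∈ S <;> simp [hi, add_comm]

theorem assignCost_update (a : ι → κ) (i : ι) (e : κ) :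
    assignCost c (Function.update a i e) = assignCost c a + c i e - c i (a i) := by
  simp only [assignCost, Function.apply_update (f := c)]
  rw [sum_update_of_mem (mem_univ i), ← add_sum_erase _ _ (mem_univ i), sdiff_singleton_eq_erase]
  ring

theorem exists_exchange (σ N : ι ↪ κ) {d : κ} (hd : d ∉ Set.range N) (i : ι) :
    ∃ X Y : ι ↪ κ, σ i ∉ Set.range X ∧
      assignCost c X + assignCost c Y = assignCost c N + assignCost c σ + c i d - c i (σ i) := by
  by_cases hdi : σ i = d
  · exact ⟨N, σ, hdi ▸ hd, by rw [hdi]; ring⟩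
  obtain ⟨S, hiS, hdS, hσN, hNσ⟩ := exists_alternating_set σ N hd hdi
  have hY : Function.Injective (S.piecewise σ N) :=
    (S.injective_piecewise_iff).2 ⟨σ.injective.injOn, N.injective.injOn, hσN⟩
  have hX : Function.Injective (Function.update (S.piecewise N σ) i d) := by
    intro j k hjk
    simp only [Function.update_apply, Set.piecewise] at hjk
    grind [N.injective.eq_iff, σ.injective.eq_iff]
  have hcost : assignCost c (Function.update (S.piecewise N σ) i d) +
      assignCost c (S.piecewise σ N) = assignCost c N + assignCost c σ + c i d - c i (σ i) := by
    rw [assignCost_update, Set.piecewise_eq_of_notMem _ _ _ hiS]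
    linarith [assignCost_piecewise_add c S N σ]
  by_cases hNS : ∃ j ∈ S, N j = σ i
  · refine ⟨⟨_, hY⟩, ⟨_, hX⟩, ?_, (add_comm _ _).trans hcost⟩
    rintro ⟨k, hk⟩
    simp only [Function.Embedding.coeFn_mk, Set.piecewise] at hk
    grind [N.injective.eq_iff, σ.injective.eq_iff]
  · refine ⟨⟨_, hX⟩, ⟨_, hY⟩, ?_, hcost⟩
    rintro ⟨k, hk⟩
    simp only [Function.Embedding.coeFn_mk, Function.update_apply, Set.piecewise] at hk
    grind [σ.injective.eq_iff]

theorem isEquilibrium_vcg {σ : ι ↪ κ} (hσ : ∀ b : ι ↪ κ, assignCost c σ ≤ assignCost c b)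
    {N : κ → ι ↪ κ} (hN : ∀ d, d ∉ Set.range (N d))
    (hNmin : ∀ d (b : ι ↪ κ), d ∉ Set.range b → assignCost c (N d) ≤ assignCost c b) :
    IsEquilibrium c (fun i => assignCost c (N (σ i)) - assignCost c σ + c i (σ i)) σ
      (fun d => assignCost c (N d) - assignCost c σ) where
  nonneg e := sub_nonneg.2 (hσ (N e))
  sub_le i e := by
    obtain ⟨X, Y, hX, hXY⟩ := exists_exchange c σ (N e) (hN e) i
    linarith [hNmin (σ i) X hX, hσ Y]
  apply_eq i := by ring
  eq_zero e he := le_antisymm (sub_nonpos.2 (hNmin e σ he)) (sub_nonneg.2 (hσ (N e)))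

variable [Fintype κ]

theorem exists_assignCost_min (P : (ι ↪ κ) → Prop) (h : ∃ b, P b) :
    ∃ a, P a ∧ ∀ b, P b → assignCost c a ≤ assignCost c b :=
  Set.exists_min_image {b | P b} (fun b => assignCost c b) (Set.toFinite _) h

theorem exists_embedding_notMem_range (h : Fintype.card ι < Fintype.card κ) (d : κ) :
    ∃ b : ι ↪ κ, d ∉ Set.range b := by
  have hcard : Fintype.card ι ≤ Fintype.card {e // e ≠ d} := by
    rw [Fintype.card_subtype_compl, Fintype.card_subtype_eq]
    omega
  obtain ⟨b⟩ := Function.Embedding.nonempty_of_card_le hcard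
  exact ⟨b.trans (Function.Embedding.subtype _), fun ⟨i, hi⟩ => (b i).2 hi⟩

namespace IsEquilibrium

variable {c} {w : ι → ℝ} {a : ι ↪ κ} {u : κ → ℝ}

theorem sum_compl_add_assignCost_le (h : IsEquilibrium c w a u) (b : ι ↪ κ) :
    ∑ e ∈ (univ.map b)ᶜ, u e + assignCost c a ≤ assignCost c b := by
  have hsplit : ∀ b : ι ↪ κ, ∑ i, u (b i) + ∑ e ∈ (univ.map b)ᶜ, u e = ∑ e, u e := fun b => by
    rw [← sum_map univ b u, sum_add_sum_compl]
  have ha : ∑ e ∈ (univ.map a)ᶜ, u e = 0 :=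
    sum_eq_zero fun e he => h.eq_zero e fun ⟨i, hi⟩ => (mem_compl.1 he) (by simp [← hi])
  have hb : ∑ i, (w i - c i (b i)) ≤ ∑ i, u (b i) := sum_le_sum fun i _ => h.sub_le i (b i)
  have hua : ∑ i, u (a i) = ∑ i, (w i - c i (a i)) := sum_congr rfl fun i _ => h.apply_eq i
  simp only [assignCost, sum_sub_distrib] at hb hua ⊢
  linarith [hsplit a, hsplit b]

theorem assignCost_le (h : IsEquilibrium c w a u) (b : ι ↪ κ) :
    assignCost c a ≤ assignCost c b := by
  linarith [h.sum_compl_add_assignCost_le b, sum_nonneg fun e (_ : e ∈ (univ.map b)ᶜ) => h.nonneg e]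

theorem le_assignCost_sub (h : IsEquilibrium c w a u) {b : ι ↪ κ} {d : κ}
    (hd : d ∉ Set.range b) : u d ≤ assignCost c b - assignCost c a := by
  have hmem : d ∈ (univ.map b)ᶜ := by simpa using hd
  linarith [h.sum_compl_add_assignCost_le b, single_le_sum (fun e _ => h.nonneg e) hmem]

end IsEquilibrium

end Assignment

section Platform

variable (Ω : Finset (Fin m × Fin n))

def orderCost (c : Fin l → Fin m → Fin n → ℝ) (o : Ω) (d : Fin l) : ℝ := c d o.1.1 o.1.2

def allocOf (a : Ω → Fin l) : Fin m × Fin n → Fin l → Bool :=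
  fun o d => decide (∃ h : o ∈ Ω, a ⟨o, h⟩ = d)

variable {Ω}

theorem allocOf_iff {a : Ω → Fin l} {o : Fin m × Fin n} {d : Fin l} :
    allocOf Ω a o d ↔ ∃ h : o ∈ Ω, a ⟨o, h⟩ = d :=
  decide_eq_true_iff

theorem courierAlloc_allocOf (hΩ : PairwiseDistinct Ω) (a : Ω ↪ Fin l) :
    CourierAlloc (allocOf Ω a) := by
  refine ⟨fun d o o' h h' => ?_, fun o d d' h h' => ?_, fun o d o' d' h h' => ?_,
    fun o d o' d' h h' => ?_⟩
  · obtain ⟨ho, rfl⟩ := allocOf_iff.1 h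
    obtain ⟨ho', he⟩ := allocOf_iff.1 h'
    exact congrArg Subtype.val (a.injective he).symm
  · obtain ⟨_, rfl⟩ := allocOf_iff.1 h
    obtain ⟨_, rfl⟩ := allocOf_iff.1 h'
    rfl
  · exact hΩ.1 o (allocOf_iff.1 h).1 o' (allocOf_iff.1 h').1
  · exact hΩ.2 o (allocOf_iff.1 h).1 o' (allocOf_iff.1 h').1

theorem serves_allocOf (a : Ω → Fin l) : Serves Ω (allocOf Ω a) := fun o =>
  ⟨fun ⟨_, h⟩ => (allocOf_iff.1 h).1, fun ho => ⟨a ⟨o, ho⟩, allocOf_iff.2 ⟨ho, rfl⟩⟩⟩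

theorem Serves.covers {y : Fin m × Fin n → Fin l → Bool} (h : Serves Ω y) : Covers Ω y :=
  fun o ho => (h o).2 ho

theorem not_allocOf_of_notMem_range {a : Ω → Fin l} {d : Fin l} (hd : d ∉ Set.range a)
    (o : Fin m × Fin n) : ¬ allocOf Ω a o d := fun h =>
  let ⟨_, he⟩ := allocOf_iff.1 h
  hd ⟨_, he⟩

theorem totalCost_allocOf (c : Fin l → Fin m → Fin n → ℝ) (a : Ω → Fin l) :
    totalCost c (allocOf Ω a) = assignCost (orderCost Ω c) a := by
  have hout : ∀ o ∉ Ω, ∑ d, (if allocOf Ω a o d then c d o.1 o.2 else 0) = 0 :=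
    fun o ho => sum_eq_zero fun d _ => if_neg fun h => ho (allocOf_iff.1 h).1
  have hin : ∀ o : Ω, ∑ d, (if allocOf Ω a o d then c d o.1.1 o.1.2 else 0) =
      orderCost Ω c o (a o) := fun o => by
    simp [allocOf_iff, orderCost]
  unfold totalCost assignCost
  rw [← sum_subset (subset_univ Ω) fun o _ ho => hout o ho, ← sum_coe_sort Ω]
  exact sum_congr rfl fun o _ => hin o

theorem eq_allocOf_of_serves {y : Fin m × Fin n → Fin l → Bool} (hy : CourierAlloc y)
    (hs : Serves Ω y) : ∃ a : Ω ↪ Fin l, y = allocOf Ω a := by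
  choose f hf using fun o : Ω => (hs o).2 o.2
  refine ⟨⟨f, fun o o' h => Subtype.ext (hy.1 _ _ _ (hf o) (h ▸ hf o'))⟩, ?_⟩
  funext o d
  refine Bool.eq_iff_iff.2 ⟨fun h => ?_, fun h => ?_⟩
  · have ho := (hs o).1 ⟨d, h⟩
    exact allocOf_iff.2 ⟨ho, hy.2.1 _ _ _ (hf ⟨o, ho⟩) h⟩
  · obtain ⟨ho, rfl⟩ := allocOf_iff.1 h
    exact hf ⟨o, ho⟩

theorem exists_embedding_of_covers {c : Fin l → Fin m → Fin n → ℝ} (hc : ∀ d b s, 0 ≤ c d b s)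
    {y : Fin m × Fin n → Fin l → Bool} (hy : CourierAlloc y) (hcov : Covers Ω y) :
    ∃ b : Ω ↪ Fin l, (∀ d, (∀ o, ¬ y o d) → d ∉ Set.range b) ∧
      assignCost (orderCost Ω c) b ≤ totalCost c y := by
  choose f hf using fun o : Ω => hcov o o.2
  refine ⟨⟨f, fun o o' h => Subtype.ext (hy.1 _ _ _ (hf o) (h ▸ hf o'))⟩,
    fun d hd ⟨o, ho⟩ => hd o (ho ▸ hf o), ?_⟩
  have hnonneg : ∀ o d, 0 ≤ if y o d then c d o.1 o.2 else 0 :=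
    fun o d => ite_nonneg (hc _ _ _) le_rfl
  calc assignCost (orderCost Ω c) f
      ≤ ∑ o : Ω, ∑ d, (if y o d then c d o.1.1 o.1.2 else 0) := sum_le_sum fun o _ => by
        simpa [orderCost, hf o] using single_le_sum (fun d _ => hnonneg o d) (mem_univ (f o))
    _ = ∑ o ∈ Ω, ∑ d, (if y o d then c d o.1 o.2 else 0) := sum_coe_sort Ω (fun o => ∑ d, if y o d then c d o.1 o.2 else 0)
    _ ≤ totalCost c y :=
        sum_le_sum_of_subset_of_nonneg (subset_univ Ω) fun o _ _ => sum_nonneg fun d _ => hnonneg o d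

theorem minCost_eq {c : Fin l → Fin m → Fin n → ℝ} (hc : ∀ d b s, 0 ≤ c d b s)
    (hΩ : PairwiseDistinct Ω) {σ : Ω ↪ Fin l}
    (hσ : ∀ b : Ω ↪ Fin l, assignCost (orderCost Ω c) σ ≤ assignCost (orderCost Ω c) b) :
    minCost c Ω = assignCost (orderCost Ω c) σ := by
  refine IsLeast.csInf_eq ⟨⟨allocOf Ω σ, courierAlloc_allocOf hΩ σ, (serves_allocOf σ).covers,
    totalCost_allocOf c σ⟩, ?_⟩
  rintro _ ⟨y, hy, hcov, rfl⟩
  obtain ⟨b, -, hb⟩ := exists_embedding_of_covers hc hy hcov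
  exact (hσ b).trans hb

theorem minCostWithout_eq {c : Fin l → Fin m → Fin n → ℝ} (hc : ∀ d b s, 0 ≤ c d b s)
    (hΩ : PairwiseDistinct Ω) {d : Fin l} {N : Ω ↪ Fin l} (hN : d ∉ Set.range N)
    (hNmin : ∀ b : Ω ↪ Fin l, d ∉ Set.range b →
      assignCost (orderCost Ω c) N ≤ assignCost (orderCost Ω c) b) :
    minCostWithout c Ω d = assignCost (orderCost Ω c) N := by
  refine IsLeast.csInf_eq ⟨⟨allocOf Ω N, courierAlloc_allocOf hΩ N, (serves_allocOf N).covers,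
    not_allocOf_of_notMem_range hN, totalCost_allocOf c N⟩, ?_⟩
  rintro _ ⟨y, hy, hcov, hd, rfl⟩
  obtain ⟨b, hb, hcost⟩ := exists_embedding_of_covers hc hy hcov
  exact (hNmin b (hb d hd)).trans hcost

section Plans

variable {c : Fin l → Fin m → Fin n → ℝ} {w : Fin m × Fin n → ℝ}
  {y : Fin m × Fin n → Fin l → Bool}

theorem planUtil_eq_of_delivers (hy : CourierAlloc y) {o : Fin m × Fin n} {d : Fin l}
    (h : y o d) : planUtil c w y d = w o - c d o.1 o.2 := by
  rw [planUtil, sum_eq_single o (fun o' _ ho' => if_neg fun h' => ho' (hy.1 d o' o h' h))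
    (by simp), if_pos h]

theorem planUtil_eq_zero {d : Fin l} (h : ∀ o, ¬ y o d) : planUtil c w y d = 0 :=
  sum_eq_zero fun o _ => if_neg (h o)

theorem CourierPlan.sub_le_planUtil (h : CourierPlan c w y) (o : Fin m × Fin n) (d : Fin l) :
    w o - c d o.1 o.2 ≤ planUtil c w y d := by
  by_cases hd : ∃ o', y o' d
  · obtain ⟨o', ho'⟩ := hd
    rw [planUtil_eq_of_delivers h.1 ho']
    exact (h.2.2.1 d o' ho').2 o
  · rw [not_exists] at hd
    rw [planUtil_eq_zero hd]
    exact h.2.2.2 d hd o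

theorem CourierPlan.planUtil_nonneg (h : CourierPlan c w y) (d : Fin l) :
    0 ≤ planUtil c w y d := by
  by_cases hd : ∃ o, y o d
  · obtain ⟨o, ho⟩ := hd
    rw [planUtil_eq_of_delivers h.1 ho]
    exact (h.2.2.1 d o ho).1
  · rw [not_exists] at hd
    rw [planUtil_eq_zero hd]

theorem isEquilibrium_of_courierPlan {a : Ω ↪ Fin l} (h : CourierPlan c w (allocOf Ω a)) :
    IsEquilibrium (orderCost Ω c) (fun o => w o) a (planUtil c w (allocOf Ω a)) where
  nonneg := h.planUtil_nonneg
  sub_le o e := h.sub_le_planUtil o e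
  apply_eq o := planUtil_eq_of_delivers h.1 (allocOf_iff.2 ⟨o.2, rfl⟩)
  eq_zero _ he := planUtil_eq_zero (not_allocOf_of_notMem_range he)

theorem courierPlan_of_isEquilibrium (hc : ∀ d b s, 0 ≤ c d b s) (hΩ : PairwiseDistinct Ω)
    {a : Ω ↪ Fin l} {w : Ω → ℝ} {u : Fin l → ℝ} (h : IsEquilibrium (orderCost Ω c) w a u) :
    CourierPlan c (fun o => if ho : o ∈ Ω then w ⟨o, ho⟩ else 0) (allocOf Ω a) ∧
      planUtil c (fun o => if ho : o ∈ Ω then w ⟨o, ho⟩ else 0) (allocOf Ω a) = u := by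
  set w' : Fin m × Fin n → ℝ := fun o => if ho : o ∈ Ω then w ⟨o, ho⟩ else 0
  have hle : ∀ o d, w' o - c d o.1 o.2 ≤ u d := by
    intro o d
    by_cases ho : o ∈ Ω
    · simpa [w', ho, orderCost] using h.sub_le ⟨o, ho⟩ d
    · simp only [w', ho, dite_false]
      linarith [hc d o.1 o.2, h.nonneg d]
  have hdel : ∀ o d, allocOf Ω a o d → w' o - c d o.1 o.2 = u d := by
    intro o d hod
    obtain ⟨ho, rfl⟩ := allocOf_iff.1 hod
    simpa [w', ho, orderCost] using (h.apply_eq ⟨o, ho⟩).symm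
  have halloc := courierAlloc_allocOf hΩ a
  refine ⟨⟨halloc, fun o => ?_, fun d o hod => ?_, fun d hd o => ?_⟩, funext fun d => ?_⟩
  · by_cases ho : o ∈ Ω
    · linarith [hdel o (a ⟨o, ho⟩) (allocOf_iff.2 ⟨ho, rfl⟩), h.nonneg (a ⟨o, ho⟩),
        hc (a ⟨o, ho⟩) o.1 o.2]
    · simp [w', ho]
  · rw [hdel o d hod]
    exact ⟨h.nonneg d, fun o' => hle o' d⟩
  · have hd' : d ∉ Set.range a := fun ⟨o', ho'⟩ => hd o' (allocOf_iff.2 ⟨o'.2, ho'⟩)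
    rw [← h.eq_zero d hd']
    exact hle o d
  · by_cases hd : d ∈ Set.range a
    · obtain ⟨o, rfl⟩ := hd
      have hod : allocOf Ω a o (a o) := allocOf_iff.2 ⟨o.2, rfl⟩
      rw [planUtil_eq_of_delivers halloc hod, hdel o _ hod]
    · rw [planUtil_eq_zero (not_allocOf_of_notMem_range hd), h.eq_zero d hd]

end Plans

end Platform

/-- Lemma 3.2: For `Ω` with distinct buyers and stores and `|Ω| < l`:
(i) any courier plan serving `Ω` is a minimum-cost matching covering `Ω`;
(ii) in any such plan every courier's utility is at most
`ū_d = C_Ω(G_D \ d) − C_Ω(G_D)`; and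
(iii) there is a courier plan serving `Ω`, with zero compensation outside `Ω`,
in which every courier attains utility exactly `ū_d`. -/
theorem courier_plan_lemma_lt
    (c : Fin l → Fin m → Fin n → ℝ) (hc : ∀ d b s, 0 ≤ c d b s)
    (Ω : Finset (Fin m × Fin n)) (hΩ : PairwiseDistinct Ω)
    (hcard : Ω.card < l) :
    (∀ (w : Fin m × Fin n → ℝ) (y : Fin m × Fin n → Fin l → Bool),
      CourierPlan c w y → Serves Ω y →
        Covers Ω y ∧ totalCost c y = minCost c Ω ∧
        ∀ d, planUtil c w y d ≤ minCostWithout c Ω d - minCost c Ω) ∧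
    (∃ (w : Fin m × Fin n → ℝ) (y : Fin m × Fin n → Fin l → Bool),
      CourierPlan c w y ∧ Serves Ω y ∧ (∀ o ∉ Ω, w o = 0) ∧
      ∀ d, planUtil c w y d = minCostWithout c Ω d - minCost c Ω) := by
  have hcard' : Fintype.card Ω < Fintype.card (Fin l) := by simpa using hcard
  choose N hN hNmin using fun d => exists_assignCost_min (orderCost Ω c)
    (fun b => d ∉ Set.range b) (exists_embedding_notMem_range hcard' d)
  obtain ⟨σ, -, hσ⟩ := exists_assignCost_min (orderCost Ω c) (fun _ => True)
    ⟨N ⟨0, by omega⟩, trivial⟩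
  replace hσ := fun b => hσ b trivial
  have hC := minCost_eq hc hΩ hσ
  have hCd := fun d => minCostWithout_eq hc hΩ (hN d) (hNmin d)
  refine ⟨fun w y hplan hserve => ?_, ?_⟩
  · obtain ⟨a, rfl⟩ := eq_allocOf_of_serves hplan.1 hserve
    have heq := isEquilibrium_of_courierPlan hplan
    have hopt : totalCost c (allocOf Ω a) = minCost c Ω := by
      rw [totalCost_allocOf, hC]
      exact le_antisymm (heq.assignCost_le σ) (hσ a)
    refine ⟨hserve.covers, hopt, fun d => ?_⟩
    rw [hCd, ← hopt, totalCost_allocOf]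
    exact heq.le_assignCost_sub (hN d)
  · obtain ⟨hplan, hu⟩ :=
      courierPlan_of_isEquilibrium hc hΩ (isEquilibrium_vcg _ hσ hN hNmin)
    exact ⟨_, _, hplan, serves_allocOf σ, fun o ho => dif_neg ho, fun d => by rw [hu, hC, hCd]⟩

end DeliveryPlatform
end
end

section
/- Let Ω ⊆ O be a set of orders in which each buyer and each store appears at most once, with |Ω| = l. Then in any courier plan (w,y) that serves Ω, the courier allocation y is a minimum-cost matching covering Ω in G_D; and there exists a courier plan (w̄, y) serving Ω with w̄_{bs} = 0 for every order (b,s) ∉ Ω in which every courier d attains a utility ū_d that is at least max_{b,s} v_b(s). -/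
/-!
Since |Ω| = l, a courier allocation serving Ω is a bijection σ between the couriers and Ω.
The best-response conditions of a courier plan say that the compensations on Ω are prices
supporting σ; summing them over the couriers, the compensations cancel against those of any
other bijection, so σ has minimum cost. Conversely, for a minimum-cost bijection σ the reduced
costs c_d(x) − c_d(σ d) on edges σ d → x give every cycle nonnegative weight (a cycle is a
permutation of Ω, and composing σ with it cannot lower the cost), so shortest-walk potentials
exist, and they are supporting prices. Raising all prices by a large constant makes every
courier's utility exceed every valuation.
-/

open scoped Classical
noncomputable section

open Finset

section Potentials

variable {V : Type*}

def walkWeight (W : V → V → ℝ) (p : List V) : ℝ :=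
  (List.zipWith W p p.tail).sum

@[simp] lemma walkWeight_singleton (W : V → V → ℝ) (a : V) : walkWeight W [a] = 0 := rfl

@[simp] lemma walkWeight_cons_cons (W : V → V → ℝ) (a b : V) (t : List V) :
    walkWeight W (a :: b :: t) = W a b + walkWeight W (b :: t) := by
  simp [walkWeight]

lemma walkWeight_append_cons (W : V → V → ℝ) (p q : List V) (x : V) :
    walkWeight W (p ++ x :: q) = walkWeight W (p ++ [x]) + walkWeight W (x :: q) := by
  induction p with
  | nil => simp
  | cons a p ih =>
    cases p with
    | nil => simp
    | cons b p =>
      simp only [List.cons_append, walkWeight_cons_cons] at ih ⊢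
      rw [ih]
      ring

lemma walkWeight_concat (W : V → V → ℝ) {p : List V} {u : V} (hp : p.getLast? = some u)
    (x : V) : walkWeight W (p ++ [x]) = walkWeight W p + W u x := by
  obtain ⟨r, rfl⟩ := List.getLast?_eq_some_iff.1 hp
  rw [List.append_assoc, List.singleton_append, walkWeight_append_cons]
  simp

lemma walkWeight_cycle_eq_sum_formPerm [Fintype V] (W : V → V → ℝ) (hdiag : ∀ x, W x x = 0)
    {a : V} {t : List V} (h : (a :: t).Nodup) :
    walkWeight W (a :: t ++ [a]) = ∑ x, W x ((a :: t).formPerm x) := by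
  set q := a :: t
  have hzip : List.zipWith W q (q.rotate 1) = q.map fun x => W x (q.formPerm x) := by
    refine List.ext_getElem (by simp) fun i h₁ h₂ => ?_
    simp [List.formPerm_apply_getElem _ h, List.getElem_rotate]
  calc walkWeight W (q ++ [a])
      = (List.zipWith W q (q.rotate 1)).sum := by
        have hlen : q.length = (q.rotate 1).length := (List.length_rotate _ _).symm
        simpa [walkWeight, q] using
          congrArg List.sum (List.zipWith_append (f := W) (l₁' := [a]) (l₂' := []) hlen)
    _ = ∑ x ∈ q.toFinset, W x (q.formPerm x) := by rw [hzip, List.sum_toFinset _ h]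
    _ = ∑ x, W x (q.formPerm x) :=
        sum_subset (subset_univ _) fun x _ hx => by
          rw [List.formPerm_apply_of_notMem (by simpa using hx), hdiag]

/-- Shortest-walk potentials: `π x` is the least weight of a simple walk ending at `x`. Extending
a minimal walk to `u` by the edge `u → x` either keeps it simple, or closes a cycle through `x`
whose removal does not increase the weight. -/
theorem exists_potential_of_cycle_nonneg [Fintype V] (W : V → V → ℝ)
    (hcyc : ∀ a t, (a :: t).Nodup → 0 ≤ walkWeight W (a :: t ++ [a])) :
    ∃ π : V → ℝ, ∀ u x, π x ≤ π u + W u x := by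
  choose P hP hPmin using fun x : V =>
    Set.exists_min_image {p : List V | p.Nodup ∧ p.getLast? = some x} (walkWeight W)
      ((List.finite_length_le V (Fintype.card V)).subset fun p hp => hp.1.length_le_card)
      ⟨[x], by simp⟩
  refine ⟨fun x => walkWeight W (P x), fun u x => ?_⟩
  obtain ⟨hnd, hlast⟩ := hP u
  by_cases hx : x ∈ P u
  · obtain ⟨p, q, hpq⟩ := List.append_of_mem hx
    rw [hpq] at hnd hlast
    have hpx : walkWeight W (P x) ≤ walkWeight W (p ++ [x]) :=
      hPmin x _ ⟨((List.cons_sublist_cons.2 (List.nil_sublist q)).append_left p).nodup hnd,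
        List.getLast?_concat⟩
    have hq : (x :: q).getLast? = some u := by
      rwa [List.getLast?_append_of_ne_nil _ (List.cons_ne_nil _ _)] at hlast
    have hcycle := hcyc x q (List.nodup_append.1 hnd).2.1
    rw [walkWeight_concat W hq] at hcycle
    have hsplit := walkWeight_append_cons W p q x
    rw [← hpq] at hsplit
    linarith
  · have hnd' : (P u ++ [x]).Nodup := List.concat_eq_append ▸ hnd.concat hx
    have hpx := hPmin x _ ⟨hnd', List.getLast?_concat⟩
    rwa [walkWeight_concat W hlast] at hpx

end Potentials

section Assignment

variable {D V : Type*} [Fintype D] [Fintype V]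

def IsMinCostAssignment (A : D → V → ℝ) (σ : D ≃ V) : Prop :=
  ∀ τ : D ≃ V, ∑ d, A d (σ d) ≤ ∑ d, A d (τ d)

theorem isMinCostAssignment_of_prices (A : D → V → ℝ) (p : V → ℝ) (σ : D ≃ V)
    (hp : ∀ d x, p x - A d x ≤ p (σ d) - A d (σ d)) : IsMinCostAssignment A σ := by
  intro τ
  have hsum := sum_le_sum fun d (_ : d ∈ univ) => hp d (τ d)
  have hprices : ∑ d, p (τ d) = ∑ d, p (σ d) := by
    rw [Equiv.sum_comp τ p, Equiv.sum_comp σ p]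
  rw [sum_sub_distrib, sum_sub_distrib, hprices] at hsum
  linarith

theorem IsMinCostAssignment.exists_prices {A : D → V → ℝ} {σ : D ≃ V}
    (hσ : IsMinCostAssignment A σ) :
    ∃ p : V → ℝ, ∀ d x, p x - A d x ≤ p (σ d) - A d (σ d) := by
  set W : V → V → ℝ := fun u x => A (σ.symm u) x - A (σ.symm u) u
  have hcyc : ∀ a t, (a :: t).Nodup → 0 ≤ walkWeight W (a :: t ++ [a]) := by
    intro a t h
    rw [walkWeight_cycle_eq_sum_formPerm W (fun x => sub_self _) h, sum_sub_distrib,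
      ← Equiv.sum_comp σ, ← Equiv.sum_comp σ (fun u => A (σ.symm u) u)]
    have := hσ (σ.trans (a :: t).formPerm)
    simp only [Equiv.symm_apply_apply, Equiv.trans_apply] at this ⊢
    linarith
  obtain ⟨π, hπ⟩ := exists_potential_of_cycle_nonneg W hcyc
  refine ⟨π, fun d x => ?_⟩
  have := hπ (σ d) x
  simp only [W, Equiv.symm_apply_apply] at this
  linarith

end Assignment

namespace DeliveryPlatform

variable {m n l : ℕ}

def ofAssignment (σ : Fin l → Fin m × Fin n) : Fin m × Fin n → Fin l → Bool :=
  fun o d => decide (o = σ d)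

@[simp] lemma ofAssignment_eq_true {σ : Fin l → Fin m × Fin n} {o : Fin m × Fin n}
    {d : Fin l} : ofAssignment σ o d = true ↔ o = σ d :=
  decide_eq_true_iff

lemma totalCost_ofAssignment (c : Fin l → Fin m → Fin n → ℝ)
    (σ : Fin l → Fin m × Fin n) :
    totalCost c (ofAssignment σ) = ∑ d, c d (σ d).1 (σ d).2 := by
  rw [totalCost, sum_comm]
  simp [ofAssignment]

lemma planUtil_ofAssignment (c : Fin l → Fin m → Fin n → ℝ) (w : Fin m × Fin n → ℝ)
    (σ : Fin l → Fin m × Fin n) (d : Fin l) :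
    planUtil c w (ofAssignment σ) d = w (σ d) - c d (σ d).1 (σ d).2 := by
  simp [planUtil, ofAssignment]

lemma courierAlloc_ofAssignment {Ω : Finset (Fin m × Fin n)} (hΩ : PairwiseDistinct Ω)
    (σ : Fin l ≃ Ω) : CourierAlloc (ofAssignment fun d => (σ d).1) := by
  simp only [CourierAlloc, ofAssignment_eq_true]
  refine ⟨?_, ?_, ?_, ?_⟩
  · rintro d _ _ rfl rfl
    rfl
  · rintro _ d d' rfl h
    exact σ.injective (Subtype.ext h)
  · rintro _ d _ d' rfl rfl h
    exact hΩ.1 _ (σ d).2 _ (σ d').2 h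
  · rintro _ d _ d' rfl rfl h
    exact hΩ.2 _ (σ d).2 _ (σ d').2 h

lemma serves_ofAssignment {Ω : Finset (Fin m × Fin n)} (σ : Fin l ≃ Ω) :
    Serves Ω (ofAssignment fun d => (σ d).1) := by
  intro o
  simp only [ofAssignment_eq_true]
  refine ⟨?_, fun ho => ⟨σ.symm ⟨o, ho⟩, by simp⟩⟩
  rintro ⟨d, rfl⟩
  exact (σ d).2

lemma exists_eq_ofAssignment {Ω : Finset (Fin m × Fin n)} {y : Fin m × Fin n → Fin l → Bool}
    (hy : CourierAlloc y) (hcov : Covers Ω y) (hcard : Ω.card = l) :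
    ∃ σ : Fin l ≃ Ω, y = ofAssignment fun d => (σ d).1 := by
  choose f hf using fun o : Ω => hcov o o.2
  have hinj : Function.Injective f := fun o o' h =>
    Subtype.ext (hy.1 _ _ _ (hf o) (h ▸ hf o'))
  have hbij : Function.Bijective f :=
    (Fintype.bijective_iff_injective_and_card f).2 ⟨hinj, by simp [hcard]⟩
  refine ⟨(Equiv.ofBijective f hbij).symm, funext fun o => funext fun d => ?_⟩
  set σ := (Equiv.ofBijective f hbij).symm
  have hσ : y (σ d) d := by
    simpa [σ, Equiv.ofBijective_apply_symm_apply] using hf (σ d)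
  rw [Bool.eq_iff_iff, ofAssignment_eq_true]
  exact ⟨fun h => hy.1 d _ _ h hσ, fun h => h ▸ hσ⟩

theorem totalCost_eq_minCost_of_serves {c : Fin l → Fin m → Fin n → ℝ}
    {Ω : Finset (Fin m × Fin n)} {w : Fin m × Fin n → ℝ}
    {y : Fin m × Fin n → Fin l → Bool}
    (hplan : CourierPlan c w y) (hserves : Serves Ω y) (hcard : Ω.card = l) :
    totalCost c y = minCost c Ω := by
  have hcov : Covers Ω y := fun o ho => (hserves o).2 ho
  obtain ⟨σ, rfl⟩ := exists_eq_ofAssignment hplan.1 hcov hcard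
  have hprices : ∀ d (x : Ω), w x - c d x.1.1 x.1.2 ≤ w (σ d) - c d (σ d).1.1 (σ d).1.2 :=
    fun d x => (hplan.2.2.1 d _ (by simp)).2 x
  symm
  refine IsLeast.csInf_eq ⟨⟨_, hplan.1, hcov, rfl⟩, ?_⟩
  rintro _ ⟨y', hy', hcov', rfl⟩
  obtain ⟨τ, rfl⟩ := exists_eq_ofAssignment hy' hcov' hcard
  simp only [totalCost_ofAssignment]
  exact isMinCostAssignment_of_prices _ _ σ hprices τ

theorem courierPlan_ofAssignment {c : Fin l → Fin m → Fin n → ℝ}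
    (hc : ∀ d b s, 0 ≤ c d b s)
    {Ω : Finset (Fin m × Fin n)} (hΩ : PairwiseDistinct Ω) (σ : Fin l ≃ Ω) (p : Ω → ℝ)
    (hp : ∀ d x, p x - c d x.1.1 x.1.2 ≤ p (σ d) - c d (σ d).1.1 (σ d).1.2)
    (hp₀ : ∀ d, 0 ≤ p (σ d) - c d (σ d).1.1 (σ d).1.2) :
    CourierPlan c (fun o => if h : o ∈ Ω then p ⟨o, h⟩ else 0)
      (ofAssignment fun d => (σ d).1) := by
  refine ⟨courierAlloc_ofAssignment hΩ σ, fun o => ?_, fun d o ho => ?_, fun d hd => ?_⟩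
  · dsimp only
    split_ifs with h
    · obtain ⟨d, hd⟩ := σ.surjective ⟨o, h⟩
      have hd₀ := hp₀ d
      rw [hd] at hd₀
      linarith [hc d o.1 o.2]
    · exact le_rfl
  · rw [ofAssignment_eq_true] at ho
    subst ho
    simp only [dif_pos (σ d).2, Subtype.coe_eta]
    refine ⟨hp₀ d, fun o' => ?_⟩
    split_ifs with h
    · exact hp d ⟨o', h⟩
    · linarith [hc d o'.1 o'.2, hp₀ d]
  · exact absurd (hd (σ d)) (by simp)

/-- Lemma 3.3: For `Ω` with distinct buyers and stores and `|Ω| = l`: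
any courier plan serving `Ω` is a minimum-cost matching covering `Ω`, and there
exists a courier plan serving `Ω`, with zero compensation outside `Ω`, in which
every courier's utility is at least `max_{b,s} v_b(s)`. -/
theorem courier_plan_lemma_eq
    (v : Fin m → Fin n → ℝ) (hv : ∀ b s, 0 ≤ v b s)
    (c : Fin l → Fin m → Fin n → ℝ) (hc : ∀ d b s, 0 ≤ c d b s)
    (Ω : Finset (Fin m × Fin n)) (hΩ : PairwiseDistinct Ω)
    (hcard : Ω.card = l) :
    (∀ (w : Fin m × Fin n → ℝ) (y : Fin m × Fin n → Fin l → Bool),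
      CourierPlan c w y → Serves Ω y →
        Covers Ω y ∧ totalCost c y = minCost c Ω) ∧
    (∃ (w : Fin m × Fin n → ℝ) (y : Fin m × Fin n → Fin l → Bool),
      CourierPlan c w y ∧ Serves Ω y ∧ (∀ o ∉ Ω, w o = 0) ∧
      ∀ d b s, v b s ≤ planUtil c w y d) := by
  refine ⟨fun w y hplan hserves =>
    ⟨fun o ho => (hserves o).2 ho, totalCost_eq_minCost_of_serves hplan hserves hcard⟩, ?_⟩
  have : Nonempty (Fin l ≃ Ω) := ⟨(Fintype.equivFinOfCardEq (by simp [hcard])).symm⟩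
  obtain ⟨σ, -, hσ⟩ := exists_min_image univ
    (fun σ : Fin l ≃ Ω => ∑ d, c d (σ d).1.1 (σ d).1.2) univ_nonempty
  obtain ⟨p, hp⟩ := IsMinCostAssignment.exists_prices (A := fun d x => c d x.1.1 x.1.2)
    fun τ => hσ τ (mem_univ τ)
  obtain ⟨K, hK⟩ := (Set.finite_range fun x : Fin l × Fin m × Fin n =>
    v x.2.1 x.2.2 - p (σ x.1) + c x.1 (σ x.1).1.1 (σ x.1).1.2).bddAbove
  have hutil : ∀ d b s, v b s ≤ p (σ d) + K - c d (σ d).1.1 (σ d).1.2 := fun d b s => by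
    linarith [hK ⟨(d, b, s), rfl⟩]
  refine ⟨_, _, courierPlan_ofAssignment hc hΩ σ (fun x => p x + K)
    (fun d x => by linarith [hp d x]) (fun d => (hv _ _).trans (hutil d (σ d).1.1 (σ d).1.2)),
    serves_ofAssignment σ, fun o ho => dif_neg ho, fun d b s => ?_⟩
  simpa [planUtil_ofAssignment] using hutil d b s

end DeliveryPlatform
end
end

section
/- If (p, w, t, x) is a with-tip equilibrium, then there exist purchase prices p' and delivery compensations w' such that (p', w', t', x) is a with-tip equilibrium with all tips zero, t' = 0 (the same allocation x is supported with zero tips). Concretely, one may take p'_s = p_s + t_{bs} and w'_{bs} = w_{bs} + t_{bs} for every delivered order (b,s), and p'_s = 0, w'_{bs} = 0 otherwise. -/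
open scoped Classical
noncomputable section

namespace DeliveryPlatform

variable {m n l : ℕ}

/-!
Couriers only see `w + t`, so replacing `(w, t)` by `(w + t, 0)` leaves every best response
unchanged, and a delivered order, already a best response of its courier, then needs no tip.
Raise each price to `p_s + ∑_b t_{bs}`, which is `p_s + t_{bs}` for the delivered order `(b, s)`
since undelivered orders carry no tip. For any order, a tip that is feasible after the change,
plus `t_{bs}`, was feasible before, so minimum tips drop by at most `t_{bs}` while prices rise by
at least `t_{bs}`: no store becomes more attractive to any buyer, and delivered orders keep their
utility.
-/
section Tips

variable (c : Fin l → Fin m → Fin n → ℝ)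

def feasibleTips (w t : Fin m → Fin n → ℝ) (b : Fin m) (s : Fin n) : Set ℝ :=
  {τ : ℝ | 0 ≤ τ ∧ ∃ tb : Fin n → ℝ, (∀ s', 0 ≤ tb s') ∧ tb s = τ ∧
    ∃ d, InBR c w (updateTips t b tb) d b s}

variable {c}

theorem minTip_eq_sInf (w t : Fin m → Fin n → ℝ) (b : Fin m) (s : Fin n) :
    minTip c w t b s = sInf (feasibleTips c w t b s) := rfl

theorem minTip_nonneg (w t : Fin m → Fin n → ℝ) (b : Fin m) (s : Fin n) :
    0 ≤ minTip c w t b s :=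
  Real.sInf_nonneg fun _ hτ => hτ.1

theorem bddBelow_feasibleTips (w t : Fin m → Fin n → ℝ) (b : Fin m) (s : Fin n) :
    BddBelow (feasibleTips c w t b s) :=
  ⟨0, fun _ hτ => hτ.1⟩

theorem cUtil_eq_of_add_eq {w₁ t₁ w₂ t₂ : Fin m → Fin n → ℝ} (h : w₁ + t₁ = w₂ + t₂) :
    cUtil c w₁ t₁ = cUtil c w₂ t₂ := by
  funext d b s
  have hbs := congrFun (congrFun h b) s
  simp only [Pi.add_apply] at hbs
  simp only [cUtil, hbs]

theorem inBR_iff_of_add_eq {w₁ t₁ w₂ t₂ : Fin m → Fin n → ℝ} (h : w₁ + t₁ = w₂ + t₂)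
    (d : Fin l) (b : Fin m) (s : Fin n) :
    InBR c w₁ t₁ d b s ↔ InBR c w₂ t₂ d b s := by
  simp only [InBR, cUtil_eq_of_add_eq h]

theorem updateTips_self (t : Fin m → Fin n → ℝ) (b : Fin m) : updateTips t b (t b) = t := by
  funext b' s'
  by_cases hb : b' = b <;> simp [updateTips, hb]

theorem add_updateTips_zero (w t : Fin m → Fin n → ℝ) (b : Fin m) (tb : Fin n → ℝ) :
    w + t + updateTips 0 b tb = w + updateTips t b (tb + t b) := by
  funext b' s'
  by_cases hb : b' = b
  · subst hb
    simp only [updateTips, Pi.add_apply, if_true]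
    ring
  · simp [updateTips, hb]

theorem minTip_le_of_inBR {w t : Fin m → Fin n → ℝ} {d : Fin l} {b : Fin m} {s : Fin n}
    (ht : ∀ s', 0 ≤ t b s') (h : InBR c w t d b s) : minTip c w t b s ≤ t b s := by
  refine csInf_le (bddBelow_feasibleTips w t b s) ⟨ht s, t b, ht, rfl, d, ?_⟩
  rwa [updateTips_self]

/-- Witness: a tip of `2 * B` on `(b, s)` alone, where `B` bounds every `|w| + |t| + |c_d|`. -/
theorem feasibleTips_nonempty (w t : Fin m → Fin n → ℝ) (d : Fin l) (b : Fin m) (s : Fin n) :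
    (feasibleTips c w t b s).Nonempty := by
  obtain ⟨B, hB⟩ := (Set.finite_range fun o : Fin m × Fin n =>
    |w o.1 o.2| + |t o.1 o.2| + |c d o.1 o.2|).bddAbove
  have hbound : ∀ b' s', |w b' s'| + |t b' s'| + |c d b' s'| ≤ B :=
    fun b' s' => hB ⟨(b', s'), rfl⟩
  have hB0 : 0 ≤ B := le_trans (by positivity) (hbound b s)
  set tb : Fin n → ℝ := Pi.single s (2 * B)
  have htb : 0 ≤ tb := Pi.single_nonneg.2 (by positivity)
  have hmain : B ≤ cUtil c w (updateTips t b tb) d b s := by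
    have := hbound b s
    simp only [cUtil, updateTips, if_true, tb, Pi.single_eq_same]
    linarith [neg_abs_le (w b s), le_abs_self (c d b s), abs_nonneg (t b s)]
  have hother : ∀ b' s', (b', s') ≠ (b, s) → cUtil c w (updateTips t b tb) d b' s' ≤ B := by
    intro b' s' hne
    have htip : updateTips t b tb b' s' ≤ |t b' s'| := by
      by_cases hb : b' = b
      · have hs : s' ≠ s := fun hs => hne (by rw [hb, hs])
        simp [updateTips, tb, hb, hs]
      · simp only [updateTips, hb, if_false]
        exact le_abs_self _
    have := hbound b' s'
    simp only [cUtil]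
    linarith [le_abs_self (w b' s'), neg_abs_le (c d b' s')]
  refine ⟨2 * B, by positivity, tb, htb, by simp [tb], d, hB0.trans hmain, fun b' s' => ?_⟩
  by_cases hbs : (b', s') = (b, s)
  · rw [Prod.mk.injEq] at hbs
    rw [hbs.1, hbs.2]
  · exact (hother b' s' hbs).trans hmain

theorem add_tip_mem_feasibleTips {w t : Fin m → Fin n → ℝ} {b : Fin m} {s : Fin n} {τ : ℝ}
    (ht : ∀ s', 0 ≤ t b s') (hτ : τ ∈ feasibleTips c (w + t) 0 b s) :
    τ + t b s ∈ feasibleTips c w t b s := by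
  obtain ⟨hτ0, tb, htb, rfl, d, hd⟩ := hτ
  refine ⟨add_nonneg hτ0 (ht s), tb + t b, fun s' => add_nonneg (htb s') (ht s'), rfl, d, ?_⟩
  exact (inBR_iff_of_add_eq (add_updateTips_zero w t b tb) d b s).1 hd

theorem minTip_le_minTip_fold_add {w t : Fin m → Fin n → ℝ} {b : Fin m} (s : Fin n)
    (ht : ∀ s', 0 ≤ t b s') : minTip c w t b s ≤ minTip c (w + t) 0 b s + t b s := by
  rcases (feasibleTips c w t b s).eq_empty_or_nonempty with he | ⟨_, _, _, _, _, d, _⟩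
  · -- `minTip c w t b s = sInf ∅ = 0`
    rw [minTip_eq_sInf, he, Real.sInf_empty]
    exact add_nonneg (minTip_nonneg _ _ b s) (ht s)
  · rw [← sub_le_iff_le_add, minTip_eq_sInf (w + t)]
    refine le_csInf (feasibleTips_nonempty _ _ d b s) fun τ hτ => ?_
    rw [sub_le_iff_le_add]
    exact csInf_le (bddBelow_feasibleTips w t b s) (add_tip_mem_feasibleTips ht hτ)

end Tips

namespace WithTipEq

variable {v : Fin m → Fin n → ℝ} {c : Fin l → Fin m → Fin n → ℝ} {p : Fin n → ℝ}
  {w t : Fin m → Fin n → ℝ} {x : Fin m → Fin n → Fin l → Bool}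

theorem price_eq_zero (h : WithTipEq v c p w t x) {s : Fin n} (hs : ∀ b d, ¬ x b s d) :
    p s = 0 :=
  h.2.2.2.2.2.2.2.2.1 s hs

theorem compensation_eq_zero (h : WithTipEq v c p w t x) {b : Fin m} {s : Fin n}
    (hx : ∀ d, ¬ x b s d) : w b s = 0 :=
  (h.2.2.2.2.2.2.2.2.2 b s hx).1

theorem tip_eq_zero (h : WithTipEq v c p w t x) {b : Fin m} {s : Fin n}
    (hx : ∀ d, ¬ x b s d) : t b s = 0 :=
  (h.2.2.2.2.2.2.2.2.2 b s hx).2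

theorem tip_nonneg (h : WithTipEq v c p w t x) (b : Fin m) (s : Fin n) : 0 ≤ t b s :=
  h.2.2.2.1 b s

theorem tip_eq_minTip (h : WithTipEq v c p w t x) {b : Fin m} {s : Fin n} {d : Fin l}
    (hx : x b s d) : t b s = minTip c w t b s :=
  (h.2.2.2.2.1 b s ⟨d, hx⟩).2.2

theorem courier_inBR (h : WithTipEq v c p w t x) {b : Fin m} {s : Fin n} {d : Fin l}
    (hx : x b s d) : InBR c w t d b s :=
  h.2.2.2.2.2.2.1 d b s hx

theorem sum_tips_eq (h : WithTipEq v c p w t x) {b : Fin m} {s : Fin n} {d : Fin l}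
    (hx : x b s d) : ∑ b', t b' s = t b s :=
  Finset.sum_eq_single b
    (fun _ _ hb' => h.tip_eq_zero fun _ hx' => hb' (h.1.2.1 _ _ _ _ _ hx' hx).1) (by simp)

theorem minTip_fold_eq_zero (h : WithTipEq v c p w t x) {b : Fin m} {s : Fin n} {d : Fin l}
    (hx : x b s d) : minTip c (w + t) 0 b s = 0 := by
  have hbr : InBR c (w + t) 0 d b s :=
    (inBR_iff_of_add_eq (add_zero (w + t)) d b s).2 (h.courier_inBR hx)
  exact le_antisymm (minTip_le_of_inBR (fun _ => le_rfl) hbr) (minTip_nonneg _ _ b s)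

theorem buyer_utility_fold_le (h : WithTipEq v c p w t x) (b : Fin m) (s : Fin n) :
    v b s - (p s + ∑ b', t b' s) - minTip c (w + t) 0 b s ≤ v b s - p s - minTip c w t b s := by
  have hmin : minTip c w t b s ≤ minTip c (w + t) 0 b s + t b s :=
    minTip_le_minTip_fold_add s (h.tip_nonneg b)
  have hsum : t b s ≤ ∑ b', t b' s :=
    Finset.single_le_sum (fun b' _ => h.tip_nonneg b' s) (Finset.mem_univ b)
  linarith

theorem buyer_utility_fold_eq (h : WithTipEq v c p w t x) {b : Fin m} {s : Fin n} {d : Fin l}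
    (hx : x b s d) :
    v b s - (p s + ∑ b', t b' s) - minTip c (w + t) 0 b s = v b s - p s - minTip c w t b s := by
  rw [h.sum_tips_eq hx, h.minTip_fold_eq_zero hx, h.tip_eq_minTip hx]
  ring

theorem fold_tips (h : WithTipEq v c p w t x) :
    WithTipEq v c (fun s => p s + ∑ b, t b s) (w + t) 0 x := by
  obtain ⟨hfeas, hp, hw, ht, hbuy, hunb, hcour, hidle, -, -⟩ := id h
  refine ⟨hfeas, fun s => add_nonneg (hp s) (Finset.sum_nonneg fun b _ => ht b s),
    fun b s => add_nonneg (hw b s) (ht b s), fun _ _ => le_rfl, ?_, ?_, ?_, ?_, ?_, ?_⟩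
  · rintro b s ⟨d, hx⟩
    obtain ⟨hnn, hbest, -⟩ := hbuy b s ⟨d, hx⟩
    beta_reduce
    rw [h.buyer_utility_fold_eq hx]
    exact ⟨hnn, fun s' => (h.buyer_utility_fold_le b s').trans (hbest s'),
      (h.minTip_fold_eq_zero hx).symm⟩
  · exact fun b hb s => (h.buyer_utility_fold_le b s).trans (hunb b hb s)
  · exact fun d b s hx => (inBR_iff_of_add_eq (add_zero (w + t)) d b s).2 (hcour d b s hx)
  · intro d hd b s
    rw [cUtil_eq_of_add_eq (add_zero (w + t))]
    exact hidle d hd b s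
  · intro s hs
    simp [h.price_eq_zero hs, h.tip_eq_zero (hs _)]
  · intro b s hx
    simp [h.compensation_eq_zero hx, h.tip_eq_zero hx]

end WithTipEq

theorem zero_tip_equivalence_general
    (v : Fin m → Fin n → ℝ) (c : Fin l → Fin m → Fin n → ℝ)
    (p : Fin n → ℝ) (w t : Fin m → Fin n → ℝ) (x : Fin m → Fin n → Fin l → Bool)
    (h : WithTipEq v c p w t x) :
    ∃ (p' : Fin n → ℝ) (w' : Fin m → Fin n → ℝ),
      (∀ b s, (∃ d, x b s d) → p' s = p s + t b s ∧ w' b s = w b s + t b s) ∧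
      (∀ s, (∀ b d, ¬ x b s d) → p' s = 0) ∧
      (∀ b s, (∀ d, ¬ x b s d) → w' b s = 0) ∧
      WithTipEq v c p' w' (fun _ _ => 0) x :=
  ⟨_, _, fun _ _ ⟨_, hx⟩ => ⟨by rw [h.sum_tips_eq hx], rfl⟩,
    fun _ hs => h.fold_tips.price_eq_zero hs, fun _ _ hx => h.fold_tips.compensation_eq_zero hx,
    h.fold_tips⟩

/-- Every with-tip equilibrium allocation is also supported by a
with-tip equilibrium with all tips zero, obtained by folding the tips into the
prices and compensations on delivered orders. -/
theorem zero_tip_equivalence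
    (v : Fin m → Fin n → ℝ) (c : Fin l → Fin m → Fin n → ℝ)
    (hv : ∀ b s, 0 ≤ v b s) (hc : ∀ d b s, 0 ≤ c d b s)
    (p : Fin n → ℝ) (w t : Fin m → Fin n → ℝ) (x : Fin m → Fin n → Fin l → Bool)
    (h : WithTipEq v c p w t x) :
    ∃ (p' : Fin n → ℝ) (w' : Fin m → Fin n → ℝ),
      (∀ b s, (∃ d, x b s d) → p' s = p s + t b s ∧ w' b s = w b s + t b s) ∧
      (∀ s, (∀ b d, ¬ x b s d) → p' s = 0) ∧
      (∀ b s, (∀ d, ¬ x b s d) → w' b s = 0) ∧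
      WithTipEq v c p' w' (fun _ _ => 0) x :=
  zero_tip_equivalence_general v c p w t x h

end DeliveryPlatform
end
end

section
/- Let l ≥ 1 and let T ⊆ B×S×D be a set of hyperedges on finite sets with |B|=|S|=|D|=l. Consider the market on (B,S,D) where every buyer values every store at 1 (v_b(s)=1 for all b,s) and courier costs are c_d(b,s)=0 if (b,s,d) ∈ T and c_d(b,s)=1 otherwise. Then T contains a perfect three-dimensional matching (a subset of T of size l in which each element of B, of S, and of D appears exactly once) if and only if the optimal welfare OPT of this market equals l. (This is the reduction establishing that computing the optimal welfare is NP-hard.) -/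
/-! In this market an allocation earns one unit for each of its triples that lies in `T` and
nothing otherwise, and the feasible allocations are exactly the three-dimensional matchings, which
have at most `l` triples (one per buyer). Since `OPT` is attained, `OPT = l` holds exactly when some
matching of `l` triples lies inside `T`. -/
open scoped Classical
noncomputable section

namespace DeliveryPlatform

variable {m n l : ℕ}

/-- A perfect three-dimensional matching within the hyperedge set `T`. -/
def HasPerfectMatching (l : ℕ) (T : Finset (Fin l × Fin l × Fin l)) : Prop :=
  ∃ M : Finset (Fin l × Fin l × Fin l), M ⊆ T ∧ M.card = l ∧
    ∀ e ∈ M, ∀ e' ∈ M,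
      (e.1 = e'.1 ∨ e.2.1 = e'.2.1 ∨ e.2.2 = e'.2.2) → e = e'

open Finset

def support (x : Fin m → Fin n → Fin l → Bool) : Finset (Fin m × Fin n × Fin l) :=
  univ.filter fun e => x e.1 e.2.1 e.2.2

def IsThreeDimMatching (M : Finset (Fin m × Fin n × Fin l)) : Prop :=
  ∀ e ∈ M, ∀ e' ∈ M, (e.1 = e'.1 ∨ e.2.1 = e'.2.1 ∨ e.2.2 = e'.2.2) → e = e'

@[simp]
lemma mem_support {x : Fin m → Fin n → Fin l → Bool} {e : Fin m × Fin n × Fin l} :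
    e ∈ support x ↔ x e.1 e.2.1 e.2.2 := by
  simp [support]

lemma support_decide_mem (M : Finset (Fin m × Fin n × Fin l)) :
    support (fun b s d => decide ((b, s, d) ∈ M)) = M := by
  ext e; simp

lemma feasible_iff_isThreeDimMatching_support {x : Fin m → Fin n → Fin l → Bool} :
    Feasible x ↔ IsThreeDimMatching (support x) := by
  constructor
  · rintro ⟨hB, hS, hD⟩ ⟨b, s, d⟩ he ⟨b', s', d'⟩ he' hshare
    simp only [mem_support] at he he'
    rcases hshare with rfl | rfl | rfl
    · obtain ⟨rfl, rfl⟩ := hB _ _ _ _ _ he he'; rfl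
    · obtain ⟨rfl, rfl⟩ := hS _ _ _ _ _ he he'; rfl
    · obtain ⟨rfl, rfl⟩ := hD _ _ _ _ _ he he'; rfl
  · intro hM
    refine ⟨fun b s d s' d' he he' => ?_, fun b s d b' d' he he' => ?_,
      fun b s d b' s' he he' => ?_⟩
    · simpa using hM (b, s, d) (mem_support.2 he) (b, s', d') (mem_support.2 he') (.inl rfl)
    · simpa using hM (b, s, d) (mem_support.2 he) (b', s, d') (mem_support.2 he') (.inr (.inl rfl))
    · simpa using hM (b, s, d) (mem_support.2 he) (b', s', d) (mem_support.2 he') (.inr (.inr rfl))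

lemma IsThreeDimMatching.card_le {M : Finset (Fin m × Fin n × Fin l)}
    (hM : IsThreeDimMatching M) : #M ≤ m := by
  simpa using card_le_card_of_injOn Prod.fst (fun _ _ => mem_univ _)
    fun e he e' he' h => hM e he e' he' (.inl h)

lemma welfare_eq_sum_support (v : Fin m → Fin n → ℝ) (c : Fin l → Fin m → Fin n → ℝ)
    (x : Fin m → Fin n → Fin l → Bool) :
    Welfare v c x = ∑ e ∈ support x, (v e.1 e.2.1 - c e.2.2 e.1 e.2.1) := by
  simp only [Welfare, support, sum_filter, Fintype.sum_prod_type]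

lemma welfare_reduction (T : Finset (Fin m × Fin n × Fin l)) (x : Fin m → Fin n → Fin l → Bool) :
    Welfare (fun _ _ => 1) (fun d b s => if (b, s, d) ∈ T then 0 else 1) x = #(support x ∩ T) := by
  rw [welfare_eq_sum_support, ← filter_mem_eq_inter, card_filter, Nat.cast_sum]
  refine sum_congr rfl fun e _ => ?_
  split_ifs <;> simp

lemma isGreatest_OPT (v : Fin m → Fin n → ℝ) (c : Fin l → Fin m → Fin n → ℝ) :
    IsGreatest {r : ℝ | ∃ x, Feasible x ∧ Welfare v c x = r} (OPT v c) := by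
  have hfin : {r : ℝ | ∃ x, Feasible x ∧ Welfare v c x = r}.Finite :=
    (Set.finite_range (Welfare v c)).subset fun _ ⟨x, _, hx⟩ => ⟨x, hx⟩
  have hne : {r : ℝ | ∃ x, Feasible x ∧ Welfare v c x = r}.Nonempty :=
    ⟨_, fun _ _ _ => false, by simp [Feasible], rfl⟩
  exact ⟨hne.csSup_mem hfin, fun _ hr => le_csSup hfin.bddAbove hr⟩

theorem three_dm_iff_opt_welfare_general
    (l : ℕ) (T : Finset (Fin l × Fin l × Fin l)) :
    HasPerfectMatching l T ↔
      OPT (fun _ _ => (1 : ℝ))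
        (fun d b s : Fin l => if (b, s, d) ∈ T then (0 : ℝ) else 1) = (l : ℝ) := by
  have hOPT := isGreatest_OPT (fun _ _ => (1 : ℝ))
    (fun d b s : Fin l => if (b, s, d) ∈ T then (0 : ℝ) else 1)
  have hcard_le (x : Fin l → Fin l → Fin l → Bool) (hx : Feasible x) :
      #(support x ∩ T) ≤ #(support x) ∧ #(support x) ≤ l :=
    ⟨card_le_card inter_subset_left, (feasible_iff_isThreeDimMatching_support.1 hx).card_le⟩
  constructor
  · rintro ⟨M, hMT, hMcard, hM⟩
    refine hOPT.unique ⟨⟨fun b s d => decide ((b, s, d) ∈ M),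
      feasible_iff_isThreeDimMatching_support.2 ?_, ?_⟩, ?_⟩
    · rwa [support_decide_mem]
    · rw [welfare_reduction, support_decide_mem, inter_eq_left.2 hMT, hMcard]
    · rintro _ ⟨x, hx, rfl⟩
      rw [welfare_reduction, Nat.cast_le]
      exact (hcard_le x hx).1.trans (hcard_le x hx).2
  · intro h
    obtain ⟨x, hx, hWx⟩ := h ▸ hOPT.1
    rw [welfare_reduction, Nat.cast_inj] at hWx
    obtain ⟨hinter, hcard⟩ := hcard_le x hx
    have hsupp : support x ∩ T = support x :=
      eq_of_subset_of_card_le inter_subset_left (by omega)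
    exact ⟨support x, inter_eq_left.1 hsupp, by omega,
      feasible_iff_isThreeDimMatching_support.1 hx⟩

/-- `T` contains a perfect three-dimensional matching iff the
optimal welfare of the associated market equals `l`. -/
theorem three_dm_iff_opt_welfare
    (l : ℕ) (hl : 1 ≤ l) (T : Finset (Fin l × Fin l × Fin l)) :
    HasPerfectMatching l T ↔
      OPT (fun _ _ => (1 : ℝ))
        (fun d b s : Fin l => if (b, s, d) ∈ T then (0 : ℝ) else 1) = (l : ℝ) :=
  three_dm_iff_opt_welfare_general l T

end DeliveryPlatform
end
end

section
/- For every real number K > 0 there exists a market whose courier costs decompose both as c_d(b,s) = c(b,s) + c_d(s) and as c_d(b,s) = c(b,s) + c_d(b) (for suitable nonnegative component functions), in which a without-tip equilibrium exists, the optimal welfare satisfies OPT ≥ K, and every without-tip equilibrium has welfare at most −K. (One such market is the two-buyer, one-store, two-courier market of Example 2.2 with all valuations and costs scaled by K.) -/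
open scoped Classical
noncomputable section

namespace DeliveryPlatform

variable {m n l : ℕ}

/-!
Buyer `b₂` values the store strictly more than `b₁`, so in every without-tip equilibrium `b₂` is
served: otherwise the price would be at least her value `10K`, which `b₁` cannot pay, or the
store would go unsold at price `0`. With a single store nothing else is executed, and delivering
`b₂`'s order costs at least `11K`, so the welfare is at most `10K - 11K = -K`. Serving `b₁` by
the courier `d₁` instead yields `3K`. The price `10K` with compensation `11K` on `b₂`'s order,
delivered by `d₁`, is an equilibrium.
-/

def singleAlloc (b : Fin m) (s : Fin n) (d : Fin l) : Fin m → Fin n → Fin l → Bool :=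
  fun b' s' d' => decide (b' = b ∧ s' = s ∧ d' = d)

theorem feasible_singleAlloc (b : Fin m) (s : Fin n) (d : Fin l) :
    Feasible (singleAlloc b s d) := by
  refine ⟨?_, ?_, ?_⟩ <;> intros <;> simp_all [singleAlloc]

theorem welfare_singleAlloc (v : Fin m → Fin n → ℝ) (c : Fin l → Fin m → Fin n → ℝ)
    (b : Fin m) (s : Fin n) (d : Fin l) :
    Welfare v c (singleAlloc b s d) = v b s - c d b s := by
  simp [Welfare, singleAlloc, ite_and]

theorem Feasible.eq_singleAlloc [Subsingleton (Fin n)] {x : Fin m → Fin n → Fin l → Bool}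
    (hx : Feasible x) {b : Fin m} {s : Fin n} {d : Fin l} (h : x b s d) :
    x = singleAlloc b s d := by
  funext b' s' d'
  obtain rfl : s' = s := Subsingleton.elim _ _
  cases h' : x b' s' d'
  · simp only [singleAlloc, false_eq_decide_iff, true_and]
    rintro ⟨rfl, rfl⟩
    simp [h'] at h
  · obtain ⟨rfl, rfl⟩ := hx.2.1 b s' d b' d' h h'
    simp [singleAlloc]

theorem le_OPT (v : Fin m → Fin n → ℝ) (c : Fin l → Fin m → Fin n → ℝ)
    {x : Fin m → Fin n → Fin l → Bool} (hx : Feasible x) : Welfare v c x ≤ OPT v c :=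
  le_csSup ((Set.finite_range (Welfare v c)).subset
    (by rintro _ ⟨x, -, rfl⟩; exact ⟨x, rfl⟩)).bddAbove ⟨x, hx, rfl⟩

theorem WithoutTipEq.exists_matched_of_forall_valuation_lt {v : Fin m → Fin n → ℝ}
    {c : Fin l → Fin m → Fin n → ℝ} {p : Fin n → ℝ} {w : Fin m → Fin n → ℝ}
    {x : Fin m → Fin n → Fin l → Bool} (heq : WithoutTipEq v c p w x) {b : Fin m} {s : Fin n}
    (hpos : 0 < v b s) (hmax : ∀ b', b' ≠ b → v b' s < v b s) : ∃ s' d, x b s' d := by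
  obtain ⟨-, -, -, hmatched, hunmatched, -, -, hunsold, -⟩ := heq
  by_contra hb
  push Not at hb
  have hprice : v b s ≤ p s := by linarith [hunmatched b hb s]
  by_cases hsold : ∃ b' d, x b' s d
  · obtain ⟨b', d, hx⟩ := hsold
    have hb' : b' ≠ b := by rintro rfl; exact hb s d hx
    linarith [(hmatched b' s ⟨d, hx⟩).1, hmax b' hb']
  · push Not at hsold
    linarith [hunsold s hsold]

-- Example 2.2 scaled by `K`: buyers `b₁ b₂`, store `s₁` and couriers `d₁ d₂` are indexed from `0`.
def exampleValuation (K : ℝ) : Fin 2 → Fin 1 → ℝ := fun b _ => ![3 * K, 10 * K] b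

def exampleBaseCost (K : ℝ) : Fin 2 → Fin 1 → ℝ := fun b _ => ![0, 11 * K] b

def exampleSurcharge (K : ℝ) : Fin 2 → ℝ := ![0, K]

def exampleCost (K : ℝ) : Fin 2 → Fin 2 → Fin 1 → ℝ :=
  fun d b s => exampleBaseCost K b s + exampleSurcharge K d

section Example

variable {K : ℝ}

theorem exampleValuation_nonneg (hK : 0 ≤ K) (b : Fin 2) (s : Fin 1) :
    0 ≤ exampleValuation K b s := by
  fin_cases b <;> simp [exampleValuation, hK]

theorem exampleBaseCost_nonneg (hK : 0 ≤ K) (b : Fin 2) (s : Fin 1) :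
    0 ≤ exampleBaseCost K b s := by
  fin_cases b <;> simp [exampleBaseCost, hK]

theorem exampleSurcharge_nonneg (hK : 0 ≤ K) (d : Fin 2) : 0 ≤ exampleSurcharge K d := by
  fin_cases d <;> simp [exampleSurcharge, hK]

theorem exampleCost_nonneg (hK : 0 ≤ K) (d b : Fin 2) (s : Fin 1) : 0 ≤ exampleCost K d b s :=
  add_nonneg (exampleBaseCost_nonneg hK b s) (exampleSurcharge_nonneg hK d)

theorem withoutTipEq_example (hK : 0 ≤ K) :
    WithoutTipEq (exampleValuation K) (exampleCost K) (fun _ => 10 * K) (exampleBaseCost K)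
      (singleAlloc 1 0 0) := by
  refine ⟨feasible_singleAlloc 1 0 0, fun _ => by linarith, exampleBaseCost_nonneg hK, ?_⟩
  have hprice : 3 * K ≤ 10 * K := by linarith
  simp [singleAlloc, exampleValuation, exampleCost, exampleBaseCost, exampleSurcharge,
    Fin.forall_fin_two, Fin.forall_fin_one, hprice, hK]

theorem three_mul_le_OPT_example : 3 * K ≤ OPT (exampleValuation K) (exampleCost K) := by
  have hOPT := le_OPT (exampleValuation K) (exampleCost K) (feasible_singleAlloc 0 0 0)
  simpa [welfare_singleAlloc, exampleValuation, exampleCost, exampleBaseCost,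
    exampleSurcharge] using hOPT

theorem welfare_le_of_withoutTipEq_example (hK : 0 < K) {p : Fin 1 → ℝ} {w : Fin 2 → Fin 1 → ℝ}
    {x : Fin 2 → Fin 1 → Fin 2 → Bool}
    (heq : WithoutTipEq (exampleValuation K) (exampleCost K) p w x) :
    Welfare (exampleValuation K) (exampleCost K) x ≤ -K := by
  obtain ⟨s, d, hx⟩ := heq.exists_matched_of_forall_valuation_lt (b := 1) (s := 0)
    (by simp [exampleValuation, hK]) (by simp [Fin.forall_fin_two, exampleValuation]; linarith)
  rw [heq.1.eq_singleAlloc hx, welfare_singleAlloc]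
  have hsurcharge := exampleSurcharge_nonneg hK.le d
  simp only [exampleValuation, exampleCost, exampleBaseCost, Matrix.cons_val_one,
    Matrix.cons_val_fin_one]
  linarith

end Example

/-- For every `K > 0` there is a market whose courier costs
decompose both ways, in which a without-tip equilibrium exists, `OPT ≥ K`, and
every without-tip equilibrium has welfare at most `−K`. -/
theorem without_tip_arbitrarily_bad_decomposable (K : ℝ) (hK : 0 < K) :
    ∃ (m n l : ℕ) (v : Fin m → Fin n → ℝ) (c : Fin l → Fin m → Fin n → ℝ),
      (∀ b s, 0 ≤ v b s) ∧ (∀ d b s, 0 ≤ c d b s) ∧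
      (∃ (c0 : Fin m → Fin n → ℝ) (cs : Fin l → Fin n → ℝ),
        (∀ b s, 0 ≤ c0 b s) ∧ (∀ d s, 0 ≤ cs d s) ∧
        ∀ d b s, c d b s = c0 b s + cs d s) ∧
      (∃ (c0 : Fin m → Fin n → ℝ) (cb : Fin l → Fin m → ℝ),
        (∀ b s, 0 ≤ c0 b s) ∧ (∀ d b, 0 ≤ cb d b) ∧
        ∀ d b s, c d b s = c0 b s + cb d b) ∧
      (∃ (p : Fin n → ℝ) (w : Fin m → Fin n → ℝ) (x : Fin m → Fin n → Fin l → Bool),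
        WithoutTipEq v c p w x) ∧
      K ≤ OPT v c ∧
      (∀ (p : Fin n → ℝ) (w : Fin m → Fin n → ℝ) (x : Fin m → Fin n → Fin l → Bool),
        WithoutTipEq v c p w x → Welfare v c x ≤ -K) := by
  refine ⟨2, 1, 2, exampleValuation K, exampleCost K, exampleValuation_nonneg hK.le,
    exampleCost_nonneg hK.le,
    ⟨exampleBaseCost K, fun d _ => exampleSurcharge K d, exampleBaseCost_nonneg hK.le,
      fun d _ => exampleSurcharge_nonneg hK.le d, fun _ _ _ => rfl⟩,
    ⟨exampleBaseCost K, fun d _ => exampleSurcharge K d, exampleBaseCost_nonneg hK.le,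
      fun d _ => exampleSurcharge_nonneg hK.le d, fun _ _ _ => rfl⟩,
    ⟨_, _, _, withoutTipEq_example hK.le⟩, ?_, fun _ _ _ => welfare_le_of_withoutTipEq_example hK⟩
  linarith [three_mul_le_OPT_example (K := K)]

end DeliveryPlatform
end
end
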